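/- arXiv:1612.07422 — 6 statements merged into one kernel-verified Lean document; each statement's English description precedes it below -/
import Mathlib

section
/- (Aubry's Crossing Lemma) Let h : ℝ² → ℝ be continuous and satisfy conditions (h1)–(h4), and let x = (x_i)_{i∈ℤ} and x* = (x*_i)_{i∈ℤ} be two distinct h-minimal configurations. Then x and x* cross at most once: the set {i ∈ ℤ : x_i = x*_i} ∪ {i ∈ ℤ : (x_i − x*_i)(x_{i+1} − x*_{i+1}) < 0} contains at most one element. Moreover, if x_i = x*_i for some i ∈ ℤ, then x and x* cross at i, i.e. (x_{i−1} − x*_{i−1})(x_{i+1} − x*_{i+1}) < 0. -/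
open Filter Topology MeasureTheory

/-- The finite segment of `x` between indices `j` and `k` is `h`-minimal. -/
def IsMinSegment (h : ℝ → ℝ → ℝ) (j k : ℤ) (x : ℤ → ℝ) : Prop :=
  ∀ y : ℤ → ℝ, y j = x j → y k = x k →
    ∑ i ∈ Finset.Ico j k, h (x i) (x (i + 1)) ≤ ∑ i ∈ Finset.Ico j k, h (y i) (y (i + 1))

/-- A bi-infinite configuration is `h`-minimal if every finite segment of it is minimal. -/
def MinimalConfig (h : ℝ → ℝ → ℝ) (x : ℤ → ℝ) : Prop :=
  ∀ j k : ℤ, j < k → IsMinSegment h j k x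

/-- The segment `(a, b, c)` is `h`-minimal (endpoints `a`, `c` fixed, middle point varies). -/
def MinTriple (h : ℝ → ℝ → ℝ) (a b c : ℝ) : Prop :=
  ∀ m : ℝ, h a b + h b c ≤ h a m + h m c

/-- Condition (h1): periodicity. -/
def CondH1 (h : ℝ → ℝ → ℝ) : Prop := ∀ x x' : ℝ, h (x + 1) (x' + 1) = h x x'

/-- Condition (h2): `h (x, x+ξ) → +∞` as `|ξ| → ∞`, uniformly in `x`. -/
def CondH2 (h : ℝ → ℝ → ℝ) : Prop :=
  ∀ M : ℝ, ∃ R : ℝ, ∀ x ξ : ℝ, R ≤ |ξ| → M ≤ h x (x + ξ)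

/-- Condition (h3). -/
def CondH3 (h : ℝ → ℝ → ℝ) : Prop :=
  ∀ x ξ x' ξ' : ℝ, x < ξ → x' < ξ' → h x x' + h ξ ξ' < h x ξ' + h ξ x'

/-- Condition (h4). -/
def CondH4 (h : ℝ → ℝ → ℝ) : Prop :=
  ∀ xb x x' ξb ξ' : ℝ, MinTriple h xb x x' → MinTriple h ξb x ξ' →
    (xb ≠ ξb ∨ x' ≠ ξ') → (xb - ξb) * (x' - ξ') < 0

/-- Condition (h5). -/
def CondH5 (h : ℝ → ℝ → ℝ) : Prop :=
  ∃ ρ : ℝ → ℝ → ℝ, Continuous (Function.uncurry ρ) ∧ (∀ s s' : ℝ, 0 < ρ s s') ∧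
    ∀ x ξ x' ξ' : ℝ, x < ξ → x' < ξ' →
      (∫ s in x..ξ, ∫ s' in x'..ξ', ρ s s') ≤ h x ξ' + h ξ x' - h x x' - h ξ ξ'

/-- Condition (h6θ). -/
def CondH6 (θ : ℝ) (h : ℝ → ℝ → ℝ) : Prop :=
  (∀ x' : ℝ, ConvexOn ℝ Set.univ fun x => θ * (x - x') ^ 2 / 2 - h x x') ∧
  (∀ x : ℝ, ConvexOn ℝ Set.univ fun x' => θ * (x' - x) ^ 2 / 2 - h x x')

section AubryAux

variable {h : ℝ → ℝ → ℝ} {x xs : ℤ → ℝ}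

private lemma sum_Ico_top {a b : ℤ} (hab : a ≤ b) (f : ℤ → ℝ) :
    ∑ k ∈ Finset.Ico a (b + 1), f k = ∑ k ∈ Finset.Ico a b, f k + f b := by
  have hins : Finset.Ico a (b + 1) = insert b (Finset.Ico a b) := by
    ext n; simp only [Finset.mem_Ico, Finset.mem_insert]; omega
  rw [hins, Finset.sum_insert (by simp), add_comm]

private lemma minTriple3 (hx : MinimalConfig h x) (i : ℤ) :
    MinTriple h (x i) (x (i + 1)) (x (i + 2)) := by
  intro m
  set u : ℤ → ℝ := fun n => if n = i + 1 then m else x n with hu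
  have hui : u i = x i := by simp only [hu]; rw [if_neg (show ¬(i = i + 1) by omega)]
  have hui1 : u (i + 1) = m := by simp [hu]
  have hui2 : u (i + 2) = x (i + 2) := by
    simp only [hu]; rw [if_neg (show ¬(i + 2 = i + 1) by omega)]
  have key := hx i (i + 2) (by omega) u hui hui2
  have hIco : Finset.Ico i (i + 2) = ({i, i + 1} : Finset ℤ) := by
    ext n; simp only [Finset.mem_Ico, Finset.mem_insert, Finset.mem_singleton]; omega
  rw [hIco] at key
  rw [Finset.sum_pair (show i ≠ i + 1 by omega), Finset.sum_pair (show i ≠ i + 1 by omega)] at key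
  rw [show i + 1 + 1 = i + 2 by ring] at key
  rw [hui, hui1, hui2] at key
  exact key

private lemma minTriple_center (hx : MinimalConfig h x) (i : ℤ) :
    MinTriple h (x (i - 1)) (x i) (x (i + 1)) := by
  have := minTriple3 hx (i - 1)
  rwa [show i - 1 + 1 = i by ring, show i - 1 + 2 = i + 1 by ring] at this

/-- If two minimal configurations coincide at two consecutive indices, they are equal. -/
private lemma eq_of_consec (h4 : CondH4 h) (hx : MinimalConfig h x) (hxs : MinimalConfig h xs)
    (i : ℤ) (e0 : x i = xs i) (e1 : x (i + 1) = xs (i + 1)) : x = xs := by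
  have fwd : ∀ n : ℤ, x n = xs n → x (n + 1) = xs (n + 1) → x (n + 2) = xs (n + 2) := by
    intro n a b
    by_contra hne2
    have t1 := minTriple3 hx n
    have t2 := minTriple3 hxs n
    rw [← a, ← b] at t2
    have := h4 (x n) (x (n + 1)) (x (n + 2)) (x n) (xs (n + 2)) t1 t2 (Or.inr hne2)
    rw [sub_self, zero_mul] at this
    exact lt_irrefl 0 this
  have bwd : ∀ n : ℤ, x (n + 1) = xs (n + 1) → x (n + 2) = xs (n + 2) → x n = xs n := by
    intro n a b
    by_contra hne2
    have t1 := minTriple3 hx n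
    have t2 := minTriple3 hxs n
    rw [← a, ← b] at t2
    have := h4 (x n) (x (n + 1)) (x (n + 2)) (xs n) (x (n + 2)) t1 t2 (Or.inl hne2)
    rw [sub_self, mul_zero] at this
    exact lt_irrefl 0 this
  have key : ∀ n : ℤ, x n = xs n ∧ x (n + 1) = xs (n + 1) := by
    intro n
    refine Int.inductionOn' n i ⟨e0, e1⟩ ?_ ?_
    · intro k _ ih
      refine ⟨ih.2, ?_⟩
      rw [show k + 1 + 1 = k + 2 by ring]
      exact fwd k ih.1 ih.2
    · intro k _ ih
      constructor
      · apply bwd (k - 1)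
        · rw [show k - 1 + 1 = k by ring]; exact ih.1
        · rw [show k - 1 + 2 = k + 1 by ring]; exact ih.2
      · rw [show k - 1 + 1 = k by ring]; exact ih.1
  funext n; exact (key n).1

/-- If two distinct minimal configurations coincide at `i`, they cross transversally there. -/
private lemma cross_at_coincidence (h4 : CondH4 h) (hx : MinimalConfig h x)
    (hxs : MinimalConfig h xs) (hne : x ≠ xs) (i : ℤ) (hi : x i = xs i) :
    (x (i - 1) - xs (i - 1)) * (x (i + 1) - xs (i + 1)) < 0 := by
  have t1 := minTriple_center hx i
  have t2 := minTriple_center hxs i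
  rw [← hi] at t2
  have hd : x (i - 1) ≠ xs (i - 1) ∨ x (i + 1) ≠ xs (i + 1) := by
    by_contra hc
    push_neg at hc
    refine hne (eq_of_consec h4 hx hxs (i - 1) hc.1 ?_)
    rw [show i - 1 + 1 = i by ring]; exact hi
  exact h4 _ _ _ _ _ t1 t2 hd

/-- Two coincidences at distinct indices are impossible. -/
private lemma no_two_coincidences (h4 : CondH4 h) (hx : MinimalConfig h x)
    (hxs : MinimalConfig h xs) (hne : x ≠ xs) (p q : ℤ) (hpq : p < q)
    (hp : x p = xs p) (hq : x q = xs q) : False := by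
  have hsum : ∑ i ∈ Finset.Ico p q, h (x i) (x (i + 1))
      = ∑ i ∈ Finset.Ico p q, h (xs i) (xs (i + 1)) :=
    le_antisymm (hx p q hpq xs hp.symm hq.symm) (hxs p q hpq x hp hq)
  -- the spliced triple
  have ht1 : MinTriple h (x (q - 1)) (x q) (xs (q + 1)) := by
    intro m
    set v : ℤ → ℝ := fun n => if n ≤ q - 1 then x n else if n = q then m else xs n with hv
    have hvp : v p = xs p := by
      simp only [hv]; rw [if_pos (show p ≤ q - 1 by omega)]; exact hp
    have hvq1 : v (q + 1) = xs (q + 1) := by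
      simp only [hv]
      rw [if_neg (show ¬(q + 1 ≤ q - 1) by omega), if_neg (show ¬(q + 1 = q) by omega)]
    have key := hxs p (q + 1) (show p < q + 1 by omega) v hvp hvq1
    have hvq : v q = m := by
      simp only [hv]; rw [if_neg (show ¬(q ≤ q - 1) by omega)]; simp
    have hvqm1 : v (q - 1) = x (q - 1) := by simp only [hv]; rw [if_pos le_rfl]
    have eqsplit : ∀ f : ℤ → ℝ, ∑ n ∈ Finset.Ico p q, f n
        = ∑ n ∈ Finset.Ico p (q - 1), f n + f (q - 1) := by
      intro f
      have := sum_Ico_top (show p ≤ q - 1 by omega) f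
      rwa [show q - 1 + 1 = q by ring] at this
    rw [sum_Ico_top (show p ≤ q by omega) (fun n => h (xs n) (xs (n + 1))), ← hsum,
      eqsplit (fun n => h (x n) (x (n + 1)))] at key
    rw [sum_Ico_top (show p ≤ q by omega) (fun n => h (v n) (v (n + 1))),
      eqsplit (fun n => h (v n) (v (n + 1)))] at key
    have hcongr : ∑ n ∈ Finset.Ico p (q - 1), h (v n) (v (n + 1))
        = ∑ n ∈ Finset.Ico p (q - 1), h (x n) (x (n + 1)) := by
      apply Finset.sum_congr rfl
      intro n hn
      rw [Finset.mem_Ico] at hn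
      have hv1 : v n = x n := by simp only [hv]; rw [if_pos (show n ≤ q - 1 by omega)]
      have hv2 : v (n + 1) = x (n + 1) := by
        simp only [hv]; rw [if_pos (show n + 1 ≤ q - 1 by omega)]
      rw [hv1, hv2]
    rw [hcongr, show q - 1 + 1 = q by ring, hvq, hvqm1, hvq1] at key
    have hxq : h (xs q) (xs (q + 1)) = h (x q) (xs (q + 1)) := by rw [hq]
    rw [hxq] at key
    linarith
  have ht2 := minTriple_center hxs q
  by_cases he : x (q - 1) = xs (q - 1)
  · refine hne (eq_of_consec h4 hx hxs (q - 1) he ?_)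
    rw [show q - 1 + 1 = q by ring]; exact hq
  · have ht1' : MinTriple h (x (q - 1)) (xs q) (xs (q + 1)) := by rw [← hq]; exact ht1
    have := h4 (x (q - 1)) (xs q) (xs (q + 1)) (xs (q - 1)) (xs (q + 1)) ht1' ht2 (Or.inl he)
    rw [sub_self, mul_zero] at this
    exact lt_irrefl 0 this

private lemma exch_le (h3 : CondH3 h) (a b c d : ℝ) :
    h (min a b) (min c d) + h (max a b) (max c d) ≤ h a c + h b d := by
  rcases le_total a b with hab | hab <;> rcases le_total c d with hcd | hcd
  · rw [min_eq_left hab, min_eq_left hcd, max_eq_right hab, max_eq_right hcd]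
  · rw [min_eq_left hab, min_eq_right hcd, max_eq_right hab, max_eq_left hcd]
    rcases eq_or_lt_of_le hab with h1 | h1
    · subst h1; linarith
    · rcases eq_or_lt_of_le hcd with h2 | h2
      · subst h2; linarith
      · have := h3 a b d c h1 h2; linarith
  · rw [min_eq_right hab, min_eq_left hcd, max_eq_left hab, max_eq_right hcd]
    rcases eq_or_lt_of_le hab with h1 | h1
    · subst h1; linarith
    · rcases eq_or_lt_of_le hcd with h2 | h2
      · subst h2; linarith
      · have := h3 b a c d h1 h2; linarith
  · rw [min_eq_right hab, min_eq_right hcd, max_eq_left hab, max_eq_left hcd]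
    linarith

private lemma exch_lt (h3 : CondH3 h) (a b c d : ℝ) (hcr : (a - b) * (c - d) < 0) :
    h (min a b) (min c d) + h (max a b) (max c d) < h a c + h b d := by
  rcases mul_neg_iff.mp hcr with ⟨h1, h2⟩ | ⟨h1, h2⟩
  · -- a > b, c < d
    have h1' : b < a := by linarith
    have h2' : c < d := by linarith
    rw [min_eq_right h1'.le, min_eq_left h2'.le, max_eq_left h1'.le, max_eq_right h2'.le]
    have := h3 b a c d h1' h2'; linarith
  · -- a < b, c > d
    have h1' : a < b := by linarith
    have h2' : d < c := by linarith
    rw [min_eq_left h1'.le, min_eq_right h2'.le, max_eq_right h1'.le, max_eq_left h2'.le]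
    have := h3 a b d c h1' h2'; linarith

/-- The exchange argument: a strict crossing inside a segment whose
endpoints are correctly ordered leads to a contradiction. -/
private lemma exchange (h3 : CondH3 h) (hx : MinimalConfig h x) (hxs : MinimalConfig h xs)
    (j k i0 : ℤ) (hjk : j < k) (hi1 : j ≤ i0) (hi2 : i0 < k)
    (hj : x j ≤ xs j) (hk : x k ≤ xs k)
    (hcr : (x i0 - xs i0) * (x (i0 + 1) - xs (i0 + 1)) < 0) : False := by
  set y : ℤ → ℝ := fun i => min (x i) (xs i) with hy
  set z : ℤ → ℝ := fun i => max (x i) (xs i) with hz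
  have S1 : ∑ i ∈ Finset.Ico j k, h (x i) (x (i + 1))
      ≤ ∑ i ∈ Finset.Ico j k, h (y i) (y (i + 1)) :=
    hx j k hjk y (by simp only [hy]; exact min_eq_left hj) (by simp only [hy]; exact min_eq_left hk)
  have S2 : ∑ i ∈ Finset.Ico j k, h (xs i) (xs (i + 1))
      ≤ ∑ i ∈ Finset.Ico j k, h (z i) (z (i + 1)) :=
    hxs j k hjk z (by simp only [hz]; exact max_eq_right hj)
      (by simp only [hz]; exact max_eq_right hk)
  have SLt : ∑ i ∈ Finset.Ico j k, (h (y i) (y (i + 1)) + h (z i) (z (i + 1)))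
      < ∑ i ∈ Finset.Ico j k, (h (x i) (x (i + 1)) + h (xs i) (xs (i + 1))) := by
    apply Finset.sum_lt_sum
    · intro i _
      exact exch_le h3 (x i) (xs i) (x (i + 1)) (xs (i + 1))
    · exact ⟨i0, Finset.mem_Ico.mpr ⟨hi1, hi2⟩,
        exch_lt h3 (x i0) (xs i0) (x (i0 + 1)) (xs (i0 + 1)) hcr⟩
  rw [Finset.sum_add_distrib, Finset.sum_add_distrib] at SLt
  linarith

/-- Main auxiliary step: given a crossing at `p` in normalized position and any crossing
at `q > p`, derive a contradiction. -/
private lemma noTwoAux (h3 : CondH3 h) (h4 : CondH4 h) (hx : MinimalConfig h x)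
    (hxs : MinimalConfig h xs) (hne : x ≠ xs) (p q : ℤ) (hpq : p < q)
    (hp0 : x p - xs p ≤ 0) (hp1 : 0 < x (p + 1) - xs (p + 1))
    (hq : x q = xs q ∨ (x q - xs q) * (x (q + 1) - xs (q + 1)) < 0) : False := by
  have hw : ∃ i : ℤ, p + 1 < i ∧ x i - xs i ≤ 0 := by
    rcases hq with hq | hq
    · refine ⟨q, ?_, by rw [hq]; simp⟩
      rcases eq_or_lt_of_le (show p + 1 ≤ q by omega) with he | hlt
      · exfalso; rw [← he] at hq; rw [hq] at hp1; simp at hp1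
      · exact hlt
    · rcases mul_neg_iff.mp hq with ⟨_, hb⟩ | ⟨ha, _⟩
      · exact ⟨q + 1, by omega, by linarith⟩
      · refine ⟨q, ?_, by linarith⟩
        rcases eq_or_lt_of_le (show p + 1 ≤ q by omega) with he | hlt
        · exfalso; rw [← he] at ha; linarith
        · exact hlt
  obtain ⟨r, ⟨hr1, hr2⟩, hleast⟩ := Int.exists_least_of_bdd
    (P := fun i => p + 1 < i ∧ x i - xs i ≤ 0) ⟨p + 2, fun z hz => by omega⟩ hw
  have hmid : ∀ i : ℤ, p + 1 ≤ i → i < r → 0 < x i - xs i := by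
    intro i hi1 hi2
    rcases eq_or_lt_of_le hi1 with he | hlt
    · rw [← he]; exact hp1
    · by_contra hle
      push_neg at hle
      have := hleast i ⟨hlt, hle⟩
      omega
  rcases lt_or_eq_of_le hr2 with hrneg | hr0
  · -- x r < xs r : strict crossing between r-1 and r
    have hpos : 0 < x (r - 1) - xs (r - 1) := hmid (r - 1) (by omega) (by omega)
    refine exchange h3 hx hxs p r (r - 1) (by omega) (by omega) (by omega)
      (by linarith) (by linarith) ?_
    rw [show r - 1 + 1 = r by ring]
    exact mul_neg_of_pos_of_neg hpos hrneg
  · -- x r = xs r : coincidence at r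
    have hre : x r = xs r := by linarith
    rcases lt_or_eq_of_le hp0 with hpneg | hpe
    · exact exchange h3 hx hxs p r p (by omega) le_rfl (by omega)
        (by linarith) (by linarith) (mul_neg_of_neg_of_pos hpneg hp1)
    · exact no_two_coincidences h4 hx hxs hne p r (by omega) (by linarith) hre

/-- No two distinct crossings. -/
private lemma noTwo (h3 : CondH3 h) (h4 : CondH4 h) (hx : MinimalConfig h x)
    (hxs : MinimalConfig h xs) (hne : x ≠ xs) (p q : ℤ) (hpq : p < q)
    (hp : x p = xs p ∨ (x p - xs p) * (x (p + 1) - xs (p + 1)) < 0)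
    (hq : x q = xs q ∨ (x q - xs q) * (x (q + 1) - xs (q + 1)) < 0) : False := by
  have hq' : xs q = x q ∨ (xs q - x q) * (xs (q + 1) - x (q + 1)) < 0 := by
    rcases hq with hq | hq
    · exact Or.inl hq.symm
    · right
      have e : (xs q - x q) * (xs (q + 1) - x (q + 1))
          = (x q - xs q) * (x (q + 1) - xs (q + 1)) := by ring
      rw [e]; exact hq
  rcases hp with hp | hp
  · have hcp := cross_at_coincidence h4 hx hxs hne p hp
    have hne1 : x (p + 1) - xs (p + 1) ≠ 0 := by
      intro hc; rw [hc, mul_zero] at hcp; exact lt_irrefl 0 hcp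
    rcases lt_or_gt_of_ne hne1 with hlt | hgt
    · exact noTwoAux h3 h4 hxs hx (fun hc => hne hc.symm) p q hpq
        (by rw [hp]; simp) (by linarith) hq'
    · exact noTwoAux h3 h4 hx hxs hne p q hpq (by rw [hp]; simp) hgt hq
  · rcases lt_trichotomy (x (p + 1) - xs (p + 1)) 0 with hlt | heq | hgt
    · have hpos : 0 < x p - xs p := by nlinarith
      exact noTwoAux h3 h4 hxs hx (fun hc => hne hc.symm) p q hpq
        (by linarith) (by linarith) hq'
    · rw [heq, mul_zero] at hp; exact lt_irrefl 0 hp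
    · have hneg : x p - xs p < 0 := by nlinarith
      exact noTwoAux h3 h4 hx hxs hne p q hpq hneg.le hgt hq

end AubryAux
/-- Aubry's Crossing Lemma: two distinct minimal configurations cross at most once,
and if they coincide at some index, they cross there. -/
theorem aubry_crossing_lemma
    (h : ℝ → ℝ → ℝ) (hcont : Continuous (Function.uncurry h))
    (h1 : CondH1 h) (h2 : CondH2 h) (h3 : CondH3 h) (h4 : CondH4 h)
    (x xs : ℤ → ℝ) (hx : MinimalConfig h x) (hxs : MinimalConfig h xs) (hne : x ≠ xs) :
    ({i : ℤ | x i = xs i} ∪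
      {i : ℤ | (x i - xs i) * (x (i + 1) - xs (i + 1)) < 0}).Subsingleton ∧
    ∀ i : ℤ, x i = xs i → (x (i - 1) - xs (i - 1)) * (x (i + 1) - xs (i + 1)) < 0 := by
  constructor
  · intro a ha b hb
    simp only [Set.mem_union, Set.mem_setOf_eq] at ha hb
    by_contra hab
    rcases lt_trichotomy a b with hlt | heq | hgt
    · exact noTwo h3 h4 hx hxs hne a b hlt ha hb
    · exact hab heq
    · exact noTwo h3 h4 hx hxs hne b a hgt hb ha
  · exact cross_at_coincidence h4 hx hxs hne
end

section
/- Let h : ℝ² → ℝ be continuous and satisfy conditions (h1)–(h4). If x = (x_i)_{i∈ℤ} is an h-minimal configuration, then the limit ρ(x) := lim_{n→+∞} x_n/n exists (in ℝ). -/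
open Filter Topology MeasureTheory

open Finset

/-!
By (h3) and (h4), two minimal configurations cross at most once (Aubry's crossing lemma). By (h1)
the translates `i ↦ x (i + q) - p` of `x` are minimal, so `x` eventually stays on one side of each
of them: for every rational `p / q`, `x n / n` is eventually above `p / q` or eventually below it,
and the rotation number is the cut of `ℚ` so defined. The cut is proper because `x` cannot outrun
every linear rate, nor fall below every one: a configuration that did would cross some
minimal configuration `i ↦ c + i * P` of integer slope twice.

Such affine minimal configurations exist for every `P : ℤ`. By (h1), the action of an `n`-step
competitor with the same endpoints is `∑ m, h (a m) (a (m + 1) + P)` for `a m = y (j + m) - m * P`,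
indices mod `n`; since `h` is submodular by (h3), the diagonal pairing `∑ m, h (a m) (a m + P)` is
smaller, and that is at least `n * min_u h (u, u + P)`, the action of the best affine line.
-/

theorem sum_Ico_eq_sum_fin (f : ℤ → ℝ) (j : ℤ) (n : ℕ) :
    ∑ i ∈ Ico j (j + n), f i = ∑ m : Fin n, f (j + m) := by
  induction n with
  | zero => simp
  | succ n ih =>
    rw [Fin.sum_univ_castSucc]
    simp only [Fin.val_castSucc, Fin.val_last]
    rw [← ih, Nat.cast_succ, ← add_assoc, sum_Ico_add_eq_sum_Ico_add_one (by omega)]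

theorem exists_lt_and_le_succ {x y : ℤ → ℝ} {j k : ℤ} (hjk : j ≤ k) (hj : y j < x j)
    (hk : x k ≤ y k) : ∃ i, j ≤ i ∧ i < k ∧ y i < x i ∧ x (i + 1) ≤ y (i + 1) := by
  induction k, hjk using Int.leInduction with
  | base => exact absurd hk hj.not_ge
  | succ k hjk ih =>
    by_cases hk' : x k ≤ y k
    · obtain ⟨i, hji, hik, hi⟩ := ih hk'
      exact ⟨i, hji, by omega, hi⟩
    · exact ⟨k, hjk, by omega, not_le.1 hk', hk⟩

theorem sum_diag_le_sum_perm_of_submodular {ι : Type*} [Fintype ι] [DecidableEq ι] {H : ℝ → ℝ → ℝ}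
    (hH : ∀ a b a' b' : ℝ, a ≤ b → a' ≤ b' → H a a' + H b b' ≤ H a b' + H b a')
    (f : ι → ℝ) (σ : Equiv.Perm ι) :
    ∑ i, H (f i) (f i) ≤ ∑ i, H (f i) (f (σ i)) := by
  induction hn : σ.support.card using Nat.strong_induction_on generalizing σ with
  | _ n ih =>
  obtain hs | hs := σ.support.eq_empty_or_nonempty
  · simp [Equiv.Perm.support_eq_empty_iff.1 hs]
  -- making `σ` fix the moved point `x` with the largest value `f x` costs nothing, by submodularity
  obtain ⟨x, hx, hmax⟩ := σ.support.exists_max_image f hs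
  set y := σ⁻¹ x with hy
  have hσy : σ y = x := by simp [hy]
  have hyx : y ≠ x := fun h => Equiv.Perm.mem_support.1 hx (by rw [← h, hσy, h])
  set τ := σ * Equiv.swap x y
  have hτ : τ.support.card < n := by
    have h := Equiv.Perm.card_support_swap_mul (f := σ⁻¹) (x := x) hyx
    rwa [Equiv.Perm.support_inv, hn, ← hy, ← Equiv.swap_inv, ← mul_inv_rev,
      Equiv.Perm.support_inv] at h
  refine (ih _ hτ τ rfl).trans ?_
  have hτx : τ x = x := by simp [τ, hσy]
  have hτy : τ y = σ x := by simp [τ]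
  have hτ_other : ∀ i, i ≠ x ∧ i ≠ y → τ i = σ i := fun i hi => by
    simp [τ, Equiv.swap_apply_of_ne_of_ne hi.1 hi.2]
  rw [← sub_nonneg, ← sum_sub_distrib,
    Fintype.sum_eq_add x y hyx.symm (fun i hi => by simp [hτ_other i hi]), hτx, hτy, hσy]
  have := hH (f y) (f x) (f (σ x)) (f x)
    (hmax y (Equiv.Perm.mem_support.2 (by rw [hσy]; exact hyx.symm)))
    (hmax (σ x) (Equiv.Perm.apply_mem_support.2 hx))
  linarith

theorem exists_sub_le_of_eventually_add_le {u : ℤ → ℝ} {p : ℝ} {q : ℤ} (hq : 0 < q)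
    (hu : ∀ᶠ i in atTop, u i + p ≤ u (i + q)) : ∃ C, ∀ᶠ n in atTop, p / q * n - C ≤ u n := by
  obtain ⟨N, hN⟩ := eventually_atTop.1 hu
  obtain ⟨C, hC⟩ := ((Ico N (N + q)).image fun n => p / q * n - u n).bddAbove
  have hq' : (q : ℝ) ≠ 0 := by exact_mod_cast hq.ne'
  have key (t : ℕ) : ∀ n, N ≤ n → n < N + (t + 1) * q → p / q * n - C ≤ u n := by
    induction t with
    | zero =>
      intro n h1 h2
      have := hC (mem_coe.2 (mem_image_of_mem _ (mem_Ico.2 ⟨h1, by simpa using h2⟩)))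
      linarith
    | succ t ih =>
      intro n h1 h2
      by_cases hn : n < N + (t + 1) * q
      · exact ih n h1 hn
      · have h3 := ih (n - q) (by nlinarith) (by push_cast at h2; nlinarith)
        have h4 := hN (n - q) (by nlinarith)
        rw [sub_add_cancel] at h4
        have e : p / q * ((n - q : ℤ) : ℝ) = p / q * n - p := by push_cast; field_simp
        linarith
  refine ⟨C, eventually_atTop.2 ⟨N, fun n hn => key (n - N).toNat n hn ?_⟩⟩
  have := Int.self_le_toNat (n - N)
  nlinarith

theorem eventually_lt_div_of_eventually_add_le {u : ℤ → ℝ} {p r : ℝ} {q : ℤ} (hq : 0 < q)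
    (hu : ∀ᶠ i in atTop, u i + p ≤ u (i + q)) (hr : r < p / q) :
    ∀ᶠ n : ℕ in atTop, r < u n / n := by
  obtain ⟨C, hC⟩ := exists_sub_le_of_eventually_add_le hq hu
  obtain ⟨M, hM⟩ := exists_nat_gt (C / (p / q - r))
  filter_upwards [tendsto_natCast_atTop_atTop.eventually hC, eventually_gt_atTop M]
    with n hn hMn
  have hn0 : (0 : ℝ) < n := by exact_mod_cast (Nat.zero_le M).trans_lt hMn
  have hC' : C < (p / q - r) * n := by
    rw [div_lt_iff₀ (sub_pos.2 hr)] at hM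
    nlinarith [(Nat.cast_lt (α := ℝ)).2 hMn]
  rw [lt_div_iff₀ hn0]
  push_cast at hn
  linarith

theorem eventually_div_lt_of_eventually_le_add {u : ℤ → ℝ} {p r : ℝ} {q : ℤ} (hq : 0 < q)
    (hu : ∀ᶠ i in atTop, u (i + q) ≤ u i + p) (hr : p / q < r) :
    ∀ᶠ n : ℕ in atTop, u n / n < r := by
  have := eventually_lt_div_of_eventually_add_le (u := fun i => -u i) (p := -p) (r := -r) hq
    (hu.mono fun i hi => by linarith) (by rw [neg_div]; linarith)
  filter_upwards [this] with n hn
  rw [neg_div] at hn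
  linarith

theorem exists_tendsto_div_of_eventually_comparable {u : ℤ → ℝ}
    (hcomp : ∀ p q : ℤ,
      (∀ᶠ i in atTop, u (i + q) ≤ u i + p) ∨ ∀ᶠ i in atTop, u i + p ≤ u (i + q))
    (hup : ¬ ∀ p : ℤ, ∀ᶠ i in atTop, u i + p ≤ u (i + 1))
    (hdown : ¬ ∀ p : ℤ, ∀ᶠ i in atTop, u (i + 1) ≤ u i + p) :
    ∃ α, Tendsto (fun n : ℕ => u n / n) atTop (𝓝 α) := by
  set S : Set ℝ := {r | ∃ p q : ℤ, 0 < q ∧ r = p / q ∧ ∀ᶠ i in atTop, u i + p ≤ u (i + q)}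
  obtain ⟨pU, hpU⟩ := not_forall.1 hup
  obtain ⟨pL, hpL⟩ := not_forall.1 hdown
  have hS : S.Nonempty := ⟨pL, pL, 1, one_pos, by simp, (hcomp pL 1).resolve_left hpL⟩
  have hSU : ∀ r ∈ S, r ≤ pU := by
    rintro _ ⟨p, q, hq, rfl, hpq⟩
    by_contra! hlt
    obtain ⟨n, h1, h2⟩ := ((eventually_lt_div_of_eventually_add_le hq hpq
      (add_div_two_lt_right.2 hlt)).and (eventually_div_lt_of_eventually_le_add one_pos
      ((hcomp pU 1).resolve_right hpU) (by simpa using left_lt_add_div_two.2 hlt))).exists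
    linarith
  refine ⟨sSup S, tendsto_order.2 ⟨fun a ha => ?_, fun a ha => ?_⟩⟩
  · obtain ⟨_, ⟨p, q, hq, rfl, hpq⟩, har⟩ := exists_lt_of_lt_csSup hS ha
    exact eventually_lt_div_of_eventually_add_le hq hpq har
  · obtain ⟨ρ, hρ, hρa⟩ := exists_rat_btwn ha
    have hq : (0 : ℤ) < ρ.den := by exact_mod_cast ρ.pos
    have hρ' : (ρ : ℝ) = (ρ.num : ℝ) / ((ρ.den : ℤ) : ℝ) := by rw [Rat.cast_def]; norm_cast
    refine eventually_div_lt_of_eventually_le_add hq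
      ((hcomp ρ.num ρ.den).resolve_right fun h => ?_) (hρ' ▸ hρa)
    exact hρ.not_ge (le_csSup ⟨pU, hSU⟩ ⟨_, _, hq, hρ', h⟩)

namespace CondH1

variable {h : ℝ → ℝ → ℝ}

theorem add_int (h1 : CondH1 h) (m : ℤ) (u v : ℝ) : h (u + m) (v + m) = h u v := by
  induction m using Int.induction_on with
  | zero => simp
  | succ k ih => rw [Int.cast_add, Int.cast_one, ← add_assoc, ← add_assoc, h1, ih]
  | pred k ih =>
    rw [← ih, ← h1]
    congr 1 <;> push_cast <;> ring

theorem exists_forall_le (h1 : CondH1 h) (hcont : Continuous (Function.uncurry h)) (P : ℝ) :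
    ∃ c, ∀ u, h c (c + P) ≤ h u (u + P) := by
  have hper : Function.Periodic (fun u => h u (u + P)) 1 := fun u => by
    simpa only [add_right_comm u 1 P] using h1 u (u + P)
  have hg : Continuous fun u => h u (u + P) :=
    hcont.comp (continuous_id.prodMk (continuous_add_const P))
  obtain ⟨_, ⟨c, rfl⟩, hc⟩ :=
    (hper.compact_of_continuous one_ne_zero hg).exists_isLeast (Set.range_nonempty _)
  exact ⟨c, fun u => hc ⟨u, rfl⟩⟩

end CondH1

namespace CondH3

variable {h : ℝ → ℝ → ℝ}

theorem add_le_add (h3 : CondH3 h) {a b a' b' : ℝ} (hab : a ≤ b) (hab' : a' ≤ b') :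
    h a a' + h b b' ≤ h a b' + h b a' := by
  rcases hab.lt_or_eq with hab | rfl
  · rcases hab'.lt_or_eq with hab' | rfl
    · exact (h3 a b a' b' hab hab').le
    · rfl
  · rw [add_comm]


theorem max_min_le (h3 : CondH3 h) (a b a' b' : ℝ) :
    h (max a b) (max a' b') + h (min a b) (min a' b') ≤ h a a' + h b b' := by
  rcases le_total a b with hab | hab <;> rcases le_total a' b' with hab' | hab' <;>
    simp only [max_eq_left, max_eq_right, min_eq_left, min_eq_right, hab, hab']
  · linarith
  · linarith [h3.add_le_add hab hab']
  · linarith [h3.add_le_add hab hab']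
  · linarith

theorem max_min_lt (h3 : CondH3 h) {a b a' b' : ℝ} (hab : b < a) (hab' : a' < b') :
    h (max a b) (max a' b') + h (min a b) (min a' b') < h a a' + h b b' := by
  rw [max_eq_left hab.le, max_eq_right hab'.le, min_eq_right hab.le, min_eq_left hab'.le]
  linarith [h3 b a a' b' hab hab']

end CondH3

theorem IsMinSegment.minTriple {h : ℝ → ℝ → ℝ} {j l i : ℤ} {z : ℤ → ℝ}
    (hz : IsMinSegment h j l z) (hj : j ≤ i - 1) (hl : i + 1 ≤ l) :
    MinTriple h (z (i - 1)) (z i) (z (i + 1)) := by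
  intro m
  have hmin := hz (Function.update z i m) (Function.update_of_ne (by omega) _ _)
    (Function.update_of_ne (by omega) _ _)
  rw [← sub_nonneg, ← sum_sub_distrib, sum_eq_add_of_mem (i - 1) i
    (by simp only [mem_Ico]; omega) (by simp only [mem_Ico]; omega) (by omega) ?_] at hmin
  · simp only [sub_add_cancel, Function.update_self, Function.update_of_ne
      (show i - 1 ≠ i by omega), Function.update_of_ne (show i + 1 ≠ i by omega)] at hmin
    linarith
  · intro t _ ht
    rw [Function.update_of_ne ht.2, Function.update_of_ne (show t + 1 ≠ i by omega), sub_self]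

theorem exists_minimalConfig_affine {h : ℝ → ℝ → ℝ} (hcont : Continuous (Function.uncurry h))
    (h1 : CondH1 h) (h3 : CondH3 h) (P : ℤ) :
    ∃ c : ℝ, MinimalConfig h fun i : ℤ => c + i * P := by
  obtain ⟨c, hc⟩ := h1.exists_forall_le hcont P
  refine ⟨c, fun j k hjk y hyj hyk => ?_⟩
  obtain ⟨n, rfl⟩ : ∃ n : ℕ, k = j + (n + 1 : ℕ) := ⟨(k - j - 1).toNat, by omega⟩
  set a : Fin (n + 1) → ℝ := fun m => y (j + m) - (m * P : ℤ)
  have hline (i : ℤ) : h (c + i * P) (c + (i + 1 : ℤ) * P) = h c (c + P) := by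
    rw [← h1.add_int (i * P) c]
    congr 1 <;> push_cast <;> ring
  have hy (m : Fin (n + 1)) :
      h (y (j + m)) (y (j + m + 1)) = h (a m) (a (finRotate _ m) + P) := by
    rw [← h1.add_int ((m : ℕ) * P) (a m)]
    rcases eq_or_ne m (Fin.last n) with rfl | hm
    · have hend : y (j + ((Fin.last n : ℕ) : ℤ) + 1) = y j + (n + 1 : ℕ) * P := by
        rw [show j + ((Fin.last n : ℕ) : ℤ) + 1 = j + (n + 1 : ℕ) by simp; ring, hyk, hyj]
        push_cast; ring
      rw [hend, finRotate_last]
      simp only [a, Fin.val_last, Fin.val_zero, Nat.cast_zero, add_zero]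
      congr 1 <;> push_cast <;> ring
    · simp only [a, coe_finRotate_of_ne_last hm]
      congr 1 <;> push_cast <;> ring_nf
  calc ∑ i ∈ Ico j (j + (n + 1 : ℕ)), h (c + i * P) (c + (i + 1 : ℤ) * P)
      = ∑ _m : Fin (n + 1), h c (c + P) := by
        rw [sum_Ico_eq_sum_fin (fun i => h (c + i * P) (c + (i + 1 : ℤ) * P))]
        exact sum_congr rfl fun m _ => hline _
    _ ≤ ∑ m, h (a m) (a m + P) := sum_le_sum fun m _ => hc (a m)
    _ ≤ ∑ m, h (a m) (a (finRotate _ m) + P) :=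
        sum_diag_le_sum_perm_of_submodular (H := fun u v => h u (v + P))
          (fun _ _ _ _ hab hab' => h3.add_le_add hab (by linarith)) a _
    _ = ∑ i ∈ Ico j (j + (n + 1 : ℕ)), h (y i) (y (i + 1)) := by
        rw [sum_Ico_eq_sum_fin (fun i => h (y i) (y (i + 1)))]
        exact sum_congr rfl fun m _ => (hy m).symm

namespace MinimalConfig

variable {h : ℝ → ℝ → ℝ} {x y : ℤ → ℝ}

theorem minTriple (hx : MinimalConfig h x) (i : ℤ) : MinTriple h (x (i - 1)) (x i) (x (i + 1)) :=
  (hx (i - 1) (i + 1) (by omega)).minTriple le_rfl le_rfl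

theorem translate (h1 : CondH1 h) (hx : MinimalConfig h x) (q p : ℤ) :
    MinimalConfig h fun i => x (i + q) - p := by
  intro j k hjk y hyj hyk
  have key := hx (j + q) (k + q) (by omega) (fun i => y (i - q) + p) (by simp [hyj])
    (by simp [hyk])
  calc ∑ i ∈ Ico j k, h (x (i + q) - p) (x (i + 1 + q) - p)
      = ∑ i ∈ Ico (j + q) (k + q), h (x i) (x (i + 1)) := by
        rw [← sum_Ico_add']
        refine sum_congr rfl fun i _ => ?_
        rw [← h1.add_int p, add_right_comm i 1 q]
        simp
    _ ≤ ∑ i ∈ Ico (j + q) (k + q), h (y (i - q) + p) (y (i + 1 - q) + p) := key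
    _ = ∑ i ∈ Ico j k, h (y i) (y (i + 1)) := by
        rw [← sum_Ico_add']
        refine sum_congr rfl fun i _ => ?_
        rw [h1.add_int, add_sub_cancel_right, add_right_comm i q 1, add_sub_cancel_right]

theorem not_cross (h3 : CondH3 h) (h4 : CondH4 h) (hx : MinimalConfig h x)
    (hy : MinimalConfig h y) {j k l : ℤ} (hjk : j < k) (hkl : k < l)
    (hj : y j < x j) (hk : x k < y k) (hl : y l < x l) : False := by
  set M : ℤ → ℝ := fun i => max (x i) (y i)
  set m : ℤ → ℝ := fun i => min (x i) (y i)
  have hxM := hx j l (by omega) M (max_eq_left hj.le) (max_eq_left hl.le)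
  have hym := hy j l (by omega) m (min_eq_right hj.le) (min_eq_right hl.le)
  have hexch (i : ℤ) : h (M i) (M (i + 1)) + h (m i) (m (i + 1)) ≤
      h (x i) (x (i + 1)) + h (y i) (y (i + 1)) := h3.max_min_le _ _ _ _
  obtain ⟨i, hji, hik, hyx, hxy⟩ := exists_lt_and_le_succ hjk.le hj hk.le
  have hi : i ∈ Ico j l := mem_Ico.2 ⟨hji, by omega⟩
  rcases hxy.lt_or_eq with hxy | hxy
  · -- a strict crossing between `i` and `i + 1` makes the exchange inequality strict
    have := sum_lt_sum (fun i _ => hexch i) ⟨i, hi, h3.max_min_lt hyx hxy⟩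
    simp only [sum_add_distrib] at this
    linarith
  · -- `x` and `y` touch at `i + 1`; then `max x y` is minimal, and (h4) forbids it to leave `x`
    have hM : IsMinSegment h j l M := fun w hwj hwl => by
      have := hx j l (by omega) w (hwj.trans (max_eq_left hj.le)) (hwl.trans (max_eq_left hl.le))
      have := sum_le_sum fun i (_ : i ∈ Ico j l) => hexch i
      simp only [sum_add_distrib] at this
      linarith
    have hTx := hx.minTriple (i + 1)
    have hTy := hy.minTriple (i + 1)
    have hTM := hM.minTriple (i := i + 1) (by omega) (by omega)
    simp only [add_sub_cancel_right] at hTx hTy hTM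
    rw [← hxy] at hTy
    have hsep := h4 _ _ _ _ _ hTx hTy (Or.inl hyx.ne')
    have hnext : x (i + 1 + 1) < y (i + 1 + 1) := by nlinarith
    simp only [M, max_eq_left hyx.le, ← hxy, max_self, max_eq_right hnext.le] at hTM
    simpa using h4 _ _ _ _ _ hTM hTx (Or.inr hnext.ne')

theorem eventually_le_or_eventually_le (h3 : CondH3 h) (h4 : CondH4 h)
    (hx : MinimalConfig h x) (hy : MinimalConfig h y) :
    (∀ᶠ i in atTop, y i ≤ x i) ∨ ∀ᶠ i in atTop, x i ≤ y i := by
  by_contra! hcon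
  simp only [frequently_atTop] at hcon
  obtain ⟨hxy, hyx⟩ := hcon
  obtain ⟨j, -, hj⟩ := hyx 0
  obtain ⟨k, hk, hk'⟩ := hxy (j + 1)
  obtain ⟨l, hl, hl'⟩ := hyx (k + 1)
  exact hx.not_cross h3 h4 hy (by omega) (by omega) hj hk' hl'

end MinimalConfig

def reflect (h : ℝ → ℝ → ℝ) : ℝ → ℝ → ℝ := fun u v => h (-u) (-v)

section Reflect

variable {h : ℝ → ℝ → ℝ}

theorem continuous_uncurry_reflect (hcont : Continuous (Function.uncurry h)) :
    Continuous (Function.uncurry (reflect h)) :=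
  hcont.comp (continuous_fst.neg.prodMk continuous_snd.neg)

theorem CondH1.reflect (h1 : CondH1 h) : CondH1 (reflect h) := fun u v => by
  simpa [_root_.reflect, neg_add, add_comm] using h1.add_int (-1) (-u) (-v)

theorem CondH3.reflect (h3 : CondH3 h) : CondH3 (reflect h) := fun a b a' b' hab hab' => by
  have := h3 (-b) (-a) (-b') (-a') (neg_lt_neg hab) (neg_lt_neg hab')
  simp only [_root_.reflect]
  linarith

theorem MinTriple.of_reflect {a b c : ℝ} (ht : MinTriple (reflect h) a b c) :
    MinTriple h (-a) (-b) (-c) := fun m => by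
  simpa [reflect] using ht (-m)

theorem CondH4.reflect (h4 : CondH4 h) : CondH4 (reflect h) := fun xb x x' ξb ξ' t1 t2 hne => by
  have := h4 _ _ _ _ _ t1.of_reflect t2.of_reflect (by simpa [neg_inj] using hne)
  linarith [show (-xb - -ξb) * (-x' - -ξ') = (xb - ξb) * (x' - ξ') by ring]

theorem MinimalConfig.neg {x : ℤ → ℝ} (hx : MinimalConfig h x) :
    MinimalConfig (reflect h) fun i => -x i := fun j k hjk y hyj hyk => by
  simpa [reflect] using hx j k hjk (fun i => -y i) (by simp [hyj]) (by simp [hyk])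

end Reflect

namespace MinimalConfig

variable {h : ℝ → ℝ → ℝ} {x : ℤ → ℝ}

theorem eventually_le_add_or_eventually_add_le (h1 : CondH1 h) (h3 : CondH3 h) (h4 : CondH4 h)
    (hx : MinimalConfig h x) (p q : ℤ) :
    (∀ᶠ i in atTop, x (i + q) ≤ x i + p) ∨ ∀ᶠ i in atTop, x i + p ≤ x (i + q) := by
  refine (hx.eventually_le_or_eventually_le h3 h4 (hx.translate h1 q p)).imp
    (fun h => h.mono fun i hi => ?_) (fun h => h.mono fun i hi => ?_) <;>
  linarith

theorem not_forall_eventually_add_le (hcont : Continuous (Function.uncurry h)) (h1 : CondH1 h)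
    (h3 : CondH3 h) (h4 : CondH4 h) (hx : MinimalConfig h x) :
    ¬ ∀ p : ℤ, ∀ᶠ i in atTop, x i + p ≤ x (i + 1) := by
  intro hfast
  obtain ⟨A, hA⟩ : ∃ A : ℤ, x 1 < x 0 + A :=
    ⟨⌈x 1 - x 0⌉ + 1, by push_cast; linarith [Int.le_ceil (x 1 - x 0)]⟩
  -- otherwise `x` would cross its translate `i ↦ x (i + 1) - A` left of `0` and far to the right
  have hleft (i : ℤ) (hi : i < 0) : x (i + 1) ≤ x i + A := by
    by_contra! hlt
    obtain ⟨l, hl, hl0⟩ := ((hfast (A + 1)).and (eventually_gt_atTop 0)).exists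
    refine (hx.translate h1 1 A).not_cross h3 h4 hx hi hl0 (by linarith)
      (by rw [zero_add]; linarith) (by push_cast at hl; linarith)
  obtain ⟨CL, hCL⟩ := exists_sub_le_of_eventually_add_le (u := fun n => x (-n)) (p := -A)
    one_pos (eventually_atTop.2 ⟨0, fun i hi => by
      have := hleft (-(i + 1)) (by omega)
      rw [show -(i + 1) + 1 = -i by ring] at this
      linarith⟩)
  obtain ⟨CR, hCR⟩ := exists_sub_le_of_eventually_add_le one_pos (hfast (A + 2))
  -- a minimal line of slope `A + 1`, lifted above `x 0`, is crossed twice by `x`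
  obtain ⟨c, hc⟩ := exists_minimalConfig_affine hcont h1 h3 (A + 1)
  set m : ℤ := ⌈x 0 - c⌉ + 1 with hm
  obtain ⟨n, hn, hn0, hnC⟩ := (hCL.and ((eventually_gt_atTop 0).and
    (tendsto_intCast_atTop_atTop.eventually_gt_atTop (CL + c + m)))).exists
  obtain ⟨l, hl, hl0, hlC⟩ := (hCR.and ((eventually_gt_atTop 0).and
    (tendsto_intCast_atTop_atTop.eventually_gt_atTop (CR + c + m)))).exists
  refine hx.not_cross h3 h4 (hc.translate h1 0 (-m)) (j := -n) (k := 0) (l := l)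
    (by omega) hl0 ?_ ?_ ?_
  · push_cast at hn ⊢
    linarith
  · push_cast [hm]
    linarith [Int.le_ceil (x 0 - c)]
  · push_cast at hl ⊢
    linarith

theorem not_forall_eventually_le_add (hcont : Continuous (Function.uncurry h)) (h1 : CondH1 h)
    (h3 : CondH3 h) (h4 : CondH4 h) (hx : MinimalConfig h x) :
    ¬ ∀ p : ℤ, ∀ᶠ i in atTop, x (i + 1) ≤ x i + p := fun hslow =>
  hx.neg.not_forall_eventually_add_le (continuous_uncurry_reflect hcont) h1.reflect h3.reflect
    h4.reflect fun p => (hslow (-p)).mono fun i hi => by push_cast at hi; linarith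

end MinimalConfig

theorem rotation_number_exists_general
    (h : ℝ → ℝ → ℝ) (hcont : Continuous (Function.uncurry h))
    (h1 : CondH1 h) (h3 : CondH3 h) (h4 : CondH4 h)
    (x : ℤ → ℝ) (hx : MinimalConfig h x) :
    ∃ α : ℝ, Tendsto (fun n : ℕ => x n / n) atTop (𝓝 α) :=
  exists_tendsto_div_of_eventually_comparable
    (hx.eventually_le_add_or_eventually_add_le h1 h3 h4)
    (hx.not_forall_eventually_add_le hcont h1 h3 h4)
    (hx.not_forall_eventually_le_add hcont h1 h3 h4)

/-- Every minimal configuration has a rotation number. -/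
theorem rotation_number_exists
    (h : ℝ → ℝ → ℝ) (hcont : Continuous (Function.uncurry h))
    (h1 : CondH1 h) (h2 : CondH2 h) (h3 : CondH3 h) (h4 : CondH4 h)
    (x : ℤ → ℝ) (hx : MinimalConfig h x) :
    ∃ α : ℝ, Tendsto (fun n : ℕ => x n / n) atTop (𝓝 α) :=
  rotation_number_exists_general h hcont h1 h3 h4 x hx
end

section
/- Let h : ℝ² → ℝ be continuous and satisfy conditions (h1)–(h4), and let p, q be relatively prime integers with q > 0. If x = (x_i)_{i∈ℤ} is an h-minimal configuration with rotation number ρ(x) = p/q, then exactly one of the following three alternatives holds: (a) x_{i+q} > x_i + p for all i ∈ ℤ; (b) x_{i+q} = x_i + p for all i ∈ ℤ; (c) x_{i+q} < x_i + p for all i ∈ ℤ. -/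
open Filter Topology MeasureTheory

/-!
Put `y i = x (i + q) - p`; by (h1) it is again minimal. If none of the three alternatives holds,
`x ≠ y` and neither lies above the other, so `x` and `y` either cross between two sites or touch
at a site `c` and, by (h4), cross there. Replacing `(x, y)` near that place by `(min x y, max x y)`
lowers the action by some `δ > 0`: by (h3) in the first case; in the second, after moving the
common point `x c` of the mixed segment `(y (c - 1), x c, x (c + 1))`, which is not minimal by
(h4). Comparing with the minimal segments of `x` and `y` from that place to a later site `k` shows
that `x` and `y` are strictly ordered after it, and that `δ` is at most the cost of swapping the
endpoints `x k` and `y k`.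

Since `x` and `y` have the same rotation number and are eventually ordered, the gaps
`|y k - x k|` have mean zero; since the action of `x` grows at most linearly, most steps of `x`
are short. Hence there are arbitrarily late `k` with a tiny gap and short neighbouring steps, and
there the swapping cost is below `δ` by uniform continuity of `h` on strips `|b - a| ≤ D`, which
(h1) reduces to a compact set.
-/

section

open Finset

theorem exists_ge_lt_one_of_eventually_sum_le {g : ℕ → ℝ} {c : ℝ} (hc : c < 1)
    (hg : ∀ᶠ N in atTop, ∑ k ∈ range N, g k ≤ c * N) (B : ℕ) : ∃ k ≥ B, g k < 1 := by
  by_contra! hge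
  have hlin : ∀ N ≥ B, ∑ k ∈ range B, g k + (N - B) ≤ ∑ k ∈ range N, g k := by
    intro N hN
    rw [← sum_range_add_sum_Ico _ hN]
    gcongr
    calc ((N : ℝ) - B) = ∑ _k ∈ Ico B N, (1 : ℝ) := by simp [Nat.cast_sub hN]
      _ ≤ ∑ k ∈ Ico B N, g k := sum_le_sum fun k hk => hge k (mem_Ico.1 hk).1
  have hgrow := (tendsto_natCast_atTop_atTop (R := ℝ)).const_mul_atTop (sub_pos.2 hc)
  obtain ⟨N, hN, hNB, hbig⟩ := (hg.and ((eventually_ge_atTop B).and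
    (hgrow.eventually_gt_atTop (B - ∑ k ∈ range B, g k)))).exists
  linarith [hlin N hNB]

theorem eventually_sum_add_le {f : ℕ → ℝ} (hf : ∀ k, 0 ≤ f k) {c c' : ℝ} (hc : c < c')
    (hsum : ∀ᶠ N in atTop, ∑ k ∈ range N, f k ≤ c * N) (s : ℕ) :
    ∀ᶠ N in atTop, ∑ k ∈ range N, f (k + s) ≤ c' * N := by
  have hgrow := (tendsto_natCast_atTop_atTop (R := ℝ)).const_mul_atTop (sub_pos.2 hc)
  filter_upwards [(tendsto_add_atTop_nat s).eventually hsum, hgrow.eventually_ge_atTop (c * s)]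
    with N hN hbig
  have hsplit : ∑ k ∈ range (N + s), f k = ∑ k ∈ range s, f k + ∑ k ∈ range N, f (k + s) := by
    rw [add_comm N, sum_range_add]
    simp only [add_comm s]
  have := sum_nonneg fun k (_ : k ∈ range s) => hf k
  push_cast at hN
  linarith

theorem tendsto_add_div_natCast {u : ℕ → ℝ} {ρ : ℝ} (hu : Tendsto (fun n => u n / n) atTop (𝓝 ρ))
    (s : ℕ) : Tendsto (fun n => u (n + s) / n) atTop (𝓝 ρ) := by
  have hshift := hu.comp (tendsto_add_atTop_nat s)
  have hratio : Tendsto (fun n : ℕ => 1 + (s : ℝ) / n) atTop (𝓝 1) := by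
    simpa using (tendsto_const_div_atTop_nhds_zero_nat (s : ℝ)).const_add 1
  refine (by simpa using hshift.mul hratio : Tendsto _ _ (𝓝 ρ)).congr' ?_
  filter_upwards [eventually_gt_atTop 0] with n hn
  field_simp

theorem tendsto_sum_sub_div {u : ℕ → ℝ} {ρ : ℝ} (hu : Tendsto (fun n => u n / n) atTop (𝓝 ρ))
    (q : ℕ) :
    Tendsto (fun N : ℕ => (∑ k ∈ range N, (u (k + q) - u k - q * ρ)) / N) atTop (𝓝 0) := by
  have hlim := ((tendsto_finsetSum (range q) fun k _ => tendsto_add_div_natCast hu k).sub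
    (tendsto_const_div_atTop_nhds_zero_nat (∑ k ∈ range q, u k))).sub_const (q * ρ)
  rw [sum_const, card_range, nsmul_eq_mul, sub_zero, sub_self] at hlim
  refine hlim.congr' ?_
  filter_upwards [eventually_gt_atTop 0] with N hN
  have htel : ∑ k ∈ range N, u (k + q) = ∑ k ∈ range q, u (N + k) + ∑ k ∈ range N, u k
      - ∑ k ∈ range q, u k := by
    have h₁ := sum_range_add_sub_sum_range u q N
    have h₂ := sum_range_add_sub_sum_range u N q
    rw [add_comm q N] at h₁
    rw [sum_congr rfl fun k _ => congrArg u (add_comm k q)]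
    linarith
  rw [sum_sub_distrib, sum_sub_distrib, htel, sum_const, card_range, nsmul_eq_mul, ← sum_div]
  field_simp
  ring

theorem tendsto_sum_abs_div_of_eventually_sign {f : ℕ → ℝ}
    (hf : (∀ᶠ k in atTop, 0 ≤ f k) ∨ ∀ᶠ k in atTop, f k ≤ 0)
    (hlim : Tendsto (fun N : ℕ => (∑ k ∈ range N, f k) / N) atTop (𝓝 0)) :
    Tendsto (fun N : ℕ => (∑ k ∈ range N, |f k|) / N) atTop (𝓝 0) := by
  wlog hpos : ∀ᶠ k in atTop, 0 ≤ f k generalizing f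
  · have hneg := (hf.resolve_left hpos).mono fun k hk => neg_nonneg.2 hk
    simpa using this (f := fun k => -f k) (Or.inl hneg)
      (by simpa [sum_neg_distrib, neg_div] using hlim.neg) hneg
  obtain ⟨B, hB⟩ := eventually_atTop.1 hpos
  have hC := hlim.add (tendsto_const_div_atTop_nhds_zero_nat (∑ k ∈ range B, (|f k| - f k)))
  rw [add_zero] at hC
  refine hC.congr' ?_
  filter_upwards [eventually_ge_atTop B] with N hN
  have htail : ∑ k ∈ Ico B N, (|f k| - f k) = 0 :=
    sum_eq_zero fun k hk => by rw [abs_of_nonneg (hB k (mem_Ico.1 hk).1), sub_self]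
  rw [← add_div, ← add_zero (∑ k ∈ range B, _), ← htail, sum_range_add_sum_Ico _ hN,
    ← sum_add_distrib]
  simp

theorem exists_ge_lt_of_averages {a b : ℕ → ℝ} (ha₀ : ∀ k, 0 ≤ a k) (hb₀ : ∀ k, 0 ≤ b k)
    (ha : Tendsto (fun N : ℕ => (∑ k ∈ range N, a k) / N) atTop (𝓝 0)) {A : ℝ} (hA : 0 ≤ A)
    (hb : ∀ᶠ N in atTop, ∑ k ∈ range N, b k ≤ A * N) {ε : ℝ} (hε : 0 < ε) (q B : ℕ) :
    ∃ k ≥ B, a (k + 1) < ε ∧ b k + b (k + q) < 4 * (A + 1) := by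
  have ha' : ∀ᶠ N : ℕ in atTop, ∑ k ∈ range N, a k ≤ ε / 16 * N := by
    filter_upwards [ha.eventually (ge_mem_nhds (by positivity : (0 : ℝ) < ε / 16)),
      eventually_gt_atTop 0] with N hN hN0
    rwa [div_le_iff₀ (by positivity)] at hN
  -- the three terms of `g` have averages at most `1 / 8`, `1 / 4` and `1 / 4`
  set g : ℕ → ℝ := fun k => a (k + 1) / ε + (b k + b (k + q)) / (4 * (A + 1))
  have hg : ∀ᶠ N in atTop, ∑ k ∈ range N, g k ≤ 5 / 8 * N := by
    filter_upwards [eventually_sum_add_le ha₀ (by linarith : ε / 16 < ε / 8) ha' 1, hb,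
      eventually_sum_add_le hb₀ (lt_add_one _) hb q] with N ha₁ hb₁ hb₂
    simp only [g, sum_add_distrib, ← sum_div]
    rw [div_add_div _ _ hε.ne' (by positivity), div_le_iff₀ (by positivity)]
    have hN : (0 : ℝ) ≤ ε * N := by positivity
    linarith [mul_le_mul_of_nonneg_right ha₁ (by positivity : (0 : ℝ) ≤ 4 * (A + 1)),
      mul_le_mul_of_nonneg_left (add_le_add hb₁ hb₂) hε.le]
  obtain ⟨k, hk, hgk⟩ := exists_ge_lt_one_of_eventually_sum_le (by norm_num) hg B
  have hM : 0 < 4 * (A + 1) := by linarith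
  refine ⟨k, hk, (div_lt_one hε).1 ?_, (div_lt_one hM).1 ?_⟩
  · linarith [hgk, div_nonneg (add_nonneg (hb₀ k) (hb₀ (k + q))) hM.le]
  · linarith [hgk, div_nonneg (ha₀ (k + 1)) hε.le]

theorem tendsto_sum_abs_sub_translate_div {x y : ℤ → ℝ} {p : ℤ} {q : ℕ} (hq : 0 < q)
    (hrot : Tendsto (fun n : ℕ => x n / n) atTop (𝓝 ((p : ℝ) / q)))
    (hy : ∀ i, y i = x (i + q) - p)
    (hsign : (∀ᶠ k : ℕ in atTop, x k ≤ y k) ∨ ∀ᶠ k : ℕ in atTop, y k ≤ x k) :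
    Tendsto (fun N : ℕ => (∑ k ∈ range N, |y k - x k|) / N) atTop (𝓝 0) := by
  refine tendsto_sum_abs_div_of_eventually_sign
    (hsign.imp (Eventually.mono · fun k hk => sub_nonneg.2 hk)
      (Eventually.mono · fun k hk => sub_nonpos.2 hk)) ?_
  have := tendsto_sum_sub_div hrot q
  rw [mul_div_cancel₀ _ (by positivity)] at this
  simpa [hy, sub_right_comm] using this

variable {h : ℝ → ℝ → ℝ}

theorem CondH1.apply_add_intCast (h1 : CondH1 h) (a b : ℝ) (n : ℤ) :
    h (a + n) (b + n) = h a b := by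
  have hper : Function.Periodic (fun t => h (a + t) (b + t)) 1 := fun t => by
    simpa only [add_assoc] using h1 (a + t) (b + t)
  simpa using hper.int_mul_eq n

theorem CondH1.apply_fract (h1 : CondH1 h) (a b : ℝ) :
    h (Int.fract a) (b - ⌊a⌋) = h a b := by
  rw [← h1.apply_add_intCast _ _ ⌊a⌋, Int.fract, sub_add_cancel, sub_add_cancel]

theorem fract_mem_strip {a b D : ℝ} (hab : |b - a| ≤ D) :
    (Int.fract a, b - ⌊a⌋) ∈ Set.Icc (0 : ℝ) 1 ×ˢ Set.Icc (-D) (D + 1) := by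
  have hfa := Int.fract_nonneg a
  have hfa' := Int.fract_lt_one a
  refine ⟨⟨hfa, hfa'.le⟩, ?_, ?_⟩ <;> rw [Int.fract] at hfa hfa' <;> linarith [abs_le.1 hab]

theorem CondH1.exists_abs_le_of_abs_sub_le (hcont : Continuous (Function.uncurry h))
    (h1 : CondH1 h) (D : ℝ) : ∃ S, ∀ a b, |b - a| ≤ D → |h a b| ≤ S := by
  obtain ⟨S, hS⟩ := (isCompact_Icc.prod isCompact_Icc).exists_bound_of_continuousOn
    (s := Set.Icc (0 : ℝ) 1 ×ˢ Set.Icc (-D) (D + 1)) hcont.continuousOn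
  exact ⟨S, fun a b hab => h1.apply_fract a b ▸ hS _ (fract_mem_strip hab)⟩

theorem CondH2.exists_forall_le (hcont : Continuous (Function.uncurry h)) (h1 : CondH1 h)
    (h2 : CondH2 h) : ∃ m, ∀ a b, m ≤ h a b := by
  obtain ⟨R, hR⟩ := h2 0
  obtain ⟨S, hS⟩ := h1.exists_abs_le_of_abs_sub_le hcont R
  refine ⟨min 0 (-S), fun a b => ?_⟩
  rcases le_or_gt R |b - a| with hba | hba
  · simpa using (min_le_left _ _).trans (hR a (b - a) hba)
  · exact (min_le_right _ _).trans (neg_le_of_abs_le (hS a b hba.le))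

theorem CondH1.exists_uniform_continuity (hcont : Continuous (Function.uncurry h))
    (h1 : CondH1 h) (D δ : ℝ) (hδ : 0 < δ) :
    ∃ ε > 0, ∀ a b b', |b - a| ≤ D → |b' - a| ≤ D → |b' - b| ≤ ε → |h a b' - h a b| ≤ δ := by
  have hK : IsCompact (Set.Icc (0 : ℝ) 1 ×ˢ Set.Icc (-D) (D + 1)) :=
    isCompact_Icc.prod isCompact_Icc
  obtain ⟨ε, hε, hmod⟩ :=
    Metric.uniformContinuousOn_iff_le.1 (hK.uniformContinuousOn_of_continuous hcont.continuousOn)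
      δ hδ
  refine ⟨ε, hε, fun a b b' hab hab' hbb' => ?_⟩
  rw [← h1.apply_fract a b, ← h1.apply_fract a b', ← Real.dist_eq]
  refine hmod _ (fract_mem_strip hab') _ (fract_mem_strip hab) ?_
  rw [Prod.dist_eq, dist_self, Real.dist_eq, sub_sub_sub_cancel_right]
  exact max_le hε.le hbb'

noncomputable def action (h : ℝ → ℝ → ℝ) (x : ℤ → ℝ) (j k : ℤ) : ℝ :=
  ∑ i ∈ Ico j k, h (x i) (x (i + 1))

theorem MinimalConfig.action_le {x : ℤ → ℝ} (hx : MinimalConfig h x) {j k : ℤ} (hjk : j < k)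
    {y : ℤ → ℝ} (hj : y j = x j) (hk : y k = x k) : action h x j k ≤ action h y j k :=
  hx j k hjk y hj hk

theorem action_update_right (z : ℤ → ℝ) {j k : ℤ} (hjk : j < k) (v : ℝ) :
    action h (Function.update z k v) j k =
      action h z j k - h (z (k - 1)) (z k) + h (z (k - 1)) v := by
  have hmem : k - 1 ∈ Ico j k := mem_Ico.2 ⟨by omega, by omega⟩
  have hrest : ∀ i ∈ (Ico j k).erase (k - 1),
      h (Function.update z k v i) (Function.update z k v (i + 1)) = h (z i) (z (i + 1)) := by
    intro i hi
    obtain ⟨hik, hi⟩ := mem_erase.1 hi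
    rw [mem_Ico] at hi
    rw [Function.update_of_ne (by omega), Function.update_of_ne (by omega)]
  simp only [action, ← add_sum_erase _ _ hmem, sum_congr rfl hrest,
    sub_add_cancel, Function.update_self, Function.update_of_ne (by omega : k - 1 ≠ k)]
  ring

theorem action_zero_natCast (x : ℤ → ℝ) (N : ℕ) :
    action h x 0 N = ∑ k ∈ range N, h (x k) (x (k + 1)) := by
  simp [action, Int.Ico_eq_finset_map]

theorem CondH1.action_translate (h1 : CondH1 h) (z : ℤ → ℝ) (q p j k : ℤ) :
    action h (fun i => z (i + q) - p) j k = action h z (j + q) (k + q) := by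
  simp only [action, ← sum_Ico_add', add_right_comm _ q 1]
  exact sum_congr rfl fun i _ => by
    simpa using (h1.apply_add_intCast (z (i + q) - p) (z (i + 1 + q) - p) p).symm

theorem MinimalConfig.translate_s5 (h1 : CondH1 h) {x : ℤ → ℝ} (hx : MinimalConfig h x) (q p : ℤ) :
    MinimalConfig h (fun i => x (i + q) - p) := by
  intro j k hjk y hj hk
  have hy : y = fun i => (fun i => y (i - q) + p) (i + q) - p := by simp
  have := hx.action_le (j := j + q) (k := k + q) (by omega) (y := fun i => y (i - q) + p)
    (by simp [hj]) (by simp [hk])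
  rw [← h1.action_translate, ← h1.action_translate, ← hy] at this
  exact this

theorem MinimalConfig.minTriple_s5 {x : ℤ → ℝ} (hx : MinimalConfig h x) (i : ℤ) :
    MinTriple h (x i) (x (i + 1)) (x (i + 2)) := by
  intro m
  have := hx.action_le (j := i) (k := i + 2) (by omega) (y := Function.update x (i + 1) m)
    (Function.update_of_ne (by omega) _ _) (Function.update_of_ne (by omega) _ _)
  have hIco : Ico i (i + 2) = {i, i + 1} := by ext; simp; omega
  rw [action, action, hIco, sum_pair (by omega), sum_pair (by omega)] at this
  simpa [add_assoc, one_add_one_eq_two] using this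

theorem MinTriple.eq_iff_eq (h4 : CondH4 h) {a b c a' c' : ℝ} (T : MinTriple h a b c)
    (T' : MinTriple h a' b c') : a = a' ↔ c = c' := by
  constructor <;> intro he <;> by_contra hne
  · simpa [he] using h4 a b c a' c' T T' (Or.inr hne)
  · simpa [he] using h4 a b c a' c' T T' (Or.inl hne)

theorem MinimalConfig.eq_of_eq_of_eq (h4 : CondH4 h) {x y : ℤ → ℝ} (hx : MinimalConfig h x)
    (hy : MinimalConfig h y) {i : ℤ} (h₀ : x i = y i) (h₁ : x (i + 1) = y (i + 1)) : x = y := by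
  suffices ∀ k, x k = y k ∧ x (k + 1) = y (k + 1) from funext fun k => (this k).1
  intro k
  refine Int.inductionOn' k i ⟨h₀, h₁⟩ (fun k _ ih => ?_) (fun k _ ih => ?_)
  · have Ty := hy.minTriple_s5 k
    rw [← ih.1, ← ih.2] at Ty
    exact ⟨ih.2, by simpa [add_assoc] using ((hx.minTriple_s5 k).eq_iff_eq h4 Ty).1 rfl⟩
  · have Tx := hx.minTriple_s5 (k - 1)
    have Ty := hy.minTriple_s5 (k - 1)
    rw [sub_add_cancel, show k - 1 + 2 = k + 1 by ring] at Tx Ty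
    rw [← ih.1, ← ih.2] at Ty
    exact ⟨(Tx.eq_iff_eq h4 Ty).2 rfl, by simpa using ih.1⟩

theorem CondH3.exchange (h3 : CondH3 h) (a b a' b' : ℝ) :
    h (min a b) (min a' b') + h (max a b) (max a' b') ≤ h a a' + h b b' := by
  have cross : ∀ {a b a' b' : ℝ}, a ≤ b → b' ≤ a' → h a b' + h b a' ≤ h a a' + h b b' := by
    intro a b a' b' hab hba
    rcases hab.lt_or_eq with hab | rfl
    · rcases hba.lt_or_eq with hba | rfl
      · exact (h3 a b b' a' hab hba).le
      · exact le_rfl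
    · linarith
  rcases le_total a b with hab | hab <;> rcases le_total a' b' with hab' | hab'
  · simp [hab, hab']
  · simpa [hab, hab'] using cross hab hab'
  · simpa [hab, hab', add_comm] using cross hab hab'
  · simp [hab, hab', add_comm]

def exchangeGain (h : ℝ → ℝ → ℝ) (x y U : ℤ → ℝ) (i : ℤ) : ℝ :=
  h (x i) (x (i + 1)) + h (y i) (y (i + 1)) - h (U i) (U (i + 1))
    - h (max (x i) (y i)) (max (x (i + 1)) (y (i + 1)))

def IsGain (h : ℝ → ℝ → ℝ) (x y U : ℤ → ℝ) (c : ℤ) : Prop :=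
  (∀ i ≠ c, U i = min (x i) (y i)) ∧ 0 < exchangeGain h x y U (c - 1) + exchangeGain h x y U c

variable {x y U : ℤ → ℝ} {c : ℤ}

theorem exchangeGain_comm (i : ℤ) : exchangeGain h y x U i = exchangeGain h x y U i := by
  simp only [exchangeGain, max_comm (y _)]
  ring

theorem exchangeGain_nonneg (h3 : CondH3 h) {i : ℤ} (hi : U i = min (x i) (y i))
    (hi' : U (i + 1) = min (x (i + 1)) (y (i + 1))) : 0 ≤ exchangeGain h x y U i := by
  have := h3.exchange (x i) (y i) (x (i + 1)) (y (i + 1))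
  rw [exchangeGain, hi, hi']
  linarith

theorem IsGain.symm (G : IsGain h x y U c) : IsGain h y x U c :=
  ⟨fun i hi => by rw [G.1 i hi, min_comm], by simpa only [exchangeGain_comm] using G.2⟩

theorem IsGain.le_sum (h3 : CondH3 h) (G : IsGain h x y U c) {j k : ℤ} (hj : j < c) (hk : c < k) :
    exchangeGain h x y U (c - 1) + exchangeGain h x y U c ≤
      ∑ i ∈ Ico j k, exchangeGain h x y U i := by
  rw [← sum_pair (show c - 1 ≠ c by omega)]
  refine sum_le_sum_of_subset_of_nonneg (fun i hi => ?_) (fun i _ hi => ?_)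
  · simp only [mem_insert, mem_singleton] at hi
    rw [mem_Ico]
    omega
  · simp only [mem_insert, mem_singleton, not_or] at hi
    exact exchangeGain_nonneg h3 (G.1 i hi.2) (G.1 (i + 1) (by omega))

theorem sum_exchangeGain (j k : ℤ) :
    ∑ i ∈ Ico j k, exchangeGain h x y U i =
      action h x j k + action h y j k - action h U j k -
        action h (fun i => max (x i) (y i)) j k := by
  simp only [exchangeGain, action, sum_sub_distrib, sum_add_distrib]

theorem IsGain.le_endpoint_defect (h3 : CondH3 h) (hx : MinimalConfig h x) (hy : MinimalConfig h y)
    (G : IsGain h x y U c) (hle : x (c - 1) ≤ y (c - 1)) {k : ℤ} (hk : c < k) :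
    exchangeGain h x y U (c - 1) + exchangeGain h x y U c ≤
      (h (U (k - 1)) (x k) - h (U (k - 1)) (U k)) +
        (h (max (x (k - 1)) (y (k - 1))) (y k) -
          h (max (x (k - 1)) (y (k - 1))) (max (x k) (y k))) := by
  have hjk : c - 1 < k := by omega
  have hU := G.1 (c - 1) (by omega)
  have hxU := hx.action_le hjk (y := Function.update U k (x k))
    (by rw [Function.update_of_ne (by omega), hU, min_eq_left hle]) (Function.update_self ..)
  have hyV := hy.action_le hjk (y := Function.update (fun i => max (x i) (y i)) k (y k))
    (by rw [Function.update_of_ne (by omega), max_eq_right hle]) (Function.update_self ..)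
  have hsum := G.le_sum h3 (show c - 1 < c by omega) hk
  rw [action_update_right _ hjk] at hxU hyV
  rw [sum_exchangeGain] at hsum
  linarith

theorem IsGain.lt_of_le (h3 : CondH3 h) (hx : MinimalConfig h x) (hy : MinimalConfig h y)
    (G : IsGain h x y U c) (hle : x (c - 1) ≤ y (c - 1)) {k : ℤ} (hk : c < k) : y k < x k := by
  by_contra! hxy
  have := G.le_endpoint_defect h3 hx hy hle hk
  rw [G.1 k hk.ne', min_eq_left hxy, max_eq_right hxy, sub_self, sub_self, add_zero] at this
  linarith [G.2]

theorem isGain_of_cross (h3 : CondH3 h) (hc : x (c - 1) < y (c - 1)) (hc' : y c < x c) :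
    IsGain h x y (fun i => min (x i) (y i)) c := by
  refine ⟨fun _ _ => rfl, add_pos_of_pos_of_nonneg ?_ (exchangeGain_nonneg h3 rfl rfl)⟩
  have := h3 _ _ _ _ hc hc'
  simp only [exchangeGain, sub_add_cancel, min_eq_left hc.le, min_eq_right hc'.le,
    max_eq_right hc.le, max_eq_left hc'.le]
  linarith

theorem isGain_of_touch (h4 : CondH4 h) (hx : MinimalConfig h x) (hc : x c = y c)
    (hlt : y (c - 1) < x (c - 1)) (hgt : x (c + 1) < y (c + 1)) :
    ∃ U, IsGain h x y U c := by
  have Tx := hx.minTriple_s5 (c - 1)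
  rw [sub_add_cancel, show c - 1 + 2 = c + 1 by ring] at Tx
  have hmix : ¬ MinTriple h (y (c - 1)) (x c) (x (c + 1)) :=
    fun T => hlt.ne ((T.eq_iff_eq h4 Tx).2 rfl)
  obtain ⟨m, hm⟩ := not_forall.1 hmix
  refine ⟨Function.update (fun i => min (x i) (y i)) c m,
    fun i hi => Function.update_of_ne hi _ _, ?_⟩
  simp only [exchangeGain, sub_add_cancel, Function.update_self,
    Function.update_of_ne (show c - 1 ≠ c by omega),
    Function.update_of_ne (show c + 1 ≠ c by omega), min_eq_right hlt.le, max_eq_left hlt.le,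
    min_eq_left hgt.le, max_eq_right hgt.le, ← hc, max_self]
  linarith

theorem exists_isGain (h3 : CondH3 h) (h4 : CondH4 h) (hx : MinimalConfig h x)
    (hy : MinimalConfig h y) (hne : x ≠ y) (ha : ∃ a, y a ≤ x a) (hb : ∃ b, x b ≤ y b) :
    ∃ U c, IsGain h x y U c := by
  by_cases htouch : ∃ z, x z = y z
  · obtain ⟨z, hz⟩ := htouch
    have hz' : x (z + 1) ≠ y (z + 1) := fun e => hne (hx.eq_of_eq_of_eq h4 hy hz e)
    have Tx := hx.minTriple_s5 (z - 1)
    have Ty := hy.minTriple_s5 (z - 1)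
    rw [sub_add_cancel, show z - 1 + 2 = z + 1 by ring] at Tx Ty
    rw [← hz] at Ty
    rcases mul_neg_iff.1 (h4 _ _ _ _ _ Tx Ty (Or.inr hz')) with ⟨hl, hr⟩ | ⟨hl, hr⟩
    · obtain ⟨U, G⟩ := isGain_of_touch h4 hx hz (by linarith) (by linarith)
      exact ⟨U, z, G⟩
    · obtain ⟨U, G⟩ := isGain_of_touch h4 hy hz.symm (by linarith) (by linarith)
      exact ⟨U, z, G.symm⟩
  · push Not at htouch
    obtain ⟨a, ha⟩ := ha
    obtain ⟨b, hb⟩ := hb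
    by_contra! hno
    have hstep : ∀ k, x (k - 1) < y (k - 1) ↔ x k < y k := fun k =>
      ⟨fun hk => lt_of_not_ge fun hk' =>
          hno _ k (isGain_of_cross h3 hk (hk'.lt_of_ne (htouch k).symm)),
        fun hk => lt_of_not_ge fun hk' =>
          hno _ k (isGain_of_cross h3 (hk'.lt_of_ne (htouch (k - 1)).symm) hk).symm⟩
    have hlt : ∀ k, x k < y k := fun k =>
      Int.inductionOn' k b (hb.lt_of_ne (htouch b)) (fun k _ ih => (hstep (k + 1)).1 (by simpa))
        (fun k _ ih => (hstep k).2 ih)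
    exact (hlt a).not_ge ha

def FrequentlyClose (x y : ℤ → ℝ) (R : ℝ) : Prop :=
  ∀ ε > 0, ∀ L : ℤ, ∃ k ≥ L, |y k - x k| ≤ ε ∧ |x k - x (k - 1)| ≤ R ∧ |y k - y (k - 1)| ≤ R

theorem FrequentlyClose.symm {x y : ℤ → ℝ} {R : ℝ} (H : FrequentlyClose x y R) :
    FrequentlyClose y x R := fun ε hε L => by
  obtain ⟨k, hk, hxy, hxk, hyk⟩ := H ε hε L
  exact ⟨k, hk, by rwa [abs_sub_comm], hyk, hxk⟩

theorem MinimalConfig.eventually_sum_le {x : ℤ → ℝ} (hx : MinimalConfig h x) {ρ S : ℝ}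
    (hrot : Tendsto (fun n : ℕ => x n / n) atTop (𝓝 ρ))
    (hS : ∀ a b, |b - a| ≤ |ρ| + 1 → h a b ≤ S) :
    ∀ᶠ N : ℕ in atTop, ∑ k ∈ range N, h (x k) (x (k + 1)) ≤ S * N := by
  have hslope : Tendsto (fun N : ℕ => (x N - x 0) / N) atTop (𝓝 ρ) := by
    simpa [sub_div] using hrot.sub (tendsto_const_div_atTop_nhds_zero_nat (x 0))
  filter_upwards [hslope.eventually (Metric.closedBall_mem_nhds ρ one_pos), eventually_gt_atTop 0]
    with N hN hN0
  set ξ := (x N - x 0) / N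
  have hξ : |ξ| ≤ |ρ| + 1 := by
    have := abs_sub_abs_le_abs_sub ξ ρ
    rw [Real.dist_eq] at hN
    linarith
  have hmin := hx.action_le (j := 0) (k := N) (by omega) (y := fun i => x 0 + i * ξ) (by simp)
    (by simp only [Int.cast_natCast, ξ]; field_simp; ring)
  rw [action_zero_natCast, action_zero_natCast] at hmin
  refine hmin.trans ?_
  calc ∑ k ∈ range N, h (x 0 + (k : ℤ) * ξ) (x 0 + ((k + 1 : ℕ) : ℤ) * ξ)
      ≤ ∑ _k ∈ range N, S := sum_le_sum fun k _ => hS _ _ (by push_cast; ring_nf; linarith)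
    _ = S * N := by simp [mul_comm]

theorem MinimalConfig.exists_frequentlyClose_translate
    (hcont : Continuous (Function.uncurry h)) (h1 : CondH1 h) (h2 : CondH2 h) {x y : ℤ → ℝ}
    (hx : MinimalConfig h x) {p : ℤ} {q : ℕ} (hq : 0 < q)
    (hrot : Tendsto (fun n : ℕ => x n / n) atTop (𝓝 ((p : ℝ) / q)))
    (hy : ∀ i, y i = x (i + q) - p)
    (hsign : (∀ᶠ k : ℕ in atTop, x k ≤ y k) ∨ ∀ᶠ k : ℕ in atTop, y k ≤ x k) :
    ∃ R, FrequentlyClose x y R := by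
  obtain ⟨m, hm⟩ := h2.exists_forall_le hcont h1
  obtain ⟨S, hS⟩ := h1.exists_abs_le_of_abs_sub_le hcont (|(p : ℝ) / q| + 1)
  have hA : 0 ≤ S - m := by
    linarith [hm 0 0, (abs_le.1 (hS 0 0 (by simp; positivity))).2]
  obtain ⟨R, hR⟩ := h2 (m + 4 * (S - m + 1))
  have hstep : ∀ a b, h a b - m < 4 * (S - m + 1) → |b - a| ≤ R := by
    intro a b hab
    by_contra! hR'
    have := hR a (b - a) hR'.le
    rw [add_sub_cancel] at this
    linarith
  have hcost : ∀ᶠ N in atTop, ∑ k ∈ range N, (h (x k) (x (k + 1)) - m) ≤ (S - m) * N := by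
    filter_upwards [hx.eventually_sum_le hrot fun a b hab => (abs_le.1 (hS a b hab)).2] with N hN
    simp only [sum_sub_distrib, sum_const, card_range, nsmul_eq_mul]
    linarith
  have hcost₀ : ∀ k : ℕ, 0 ≤ h (x k) (x (k + 1)) - m := fun k => sub_nonneg.2 (hm _ _)
  refine ⟨R, fun ε hε L => ?_⟩
  obtain ⟨k, hk, hgap, hcostk⟩ := exists_ge_lt_of_averages (fun k => abs_nonneg _) hcost₀
    (tendsto_sum_abs_sub_translate_div hq hrot hy hsign) hA hcost hε q L.toNat
  refine ⟨(k + 1 : ℕ), by omega, hgap.le, ?_, ?_⟩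
  · have := hstep (x k) (x (k + 1)) (by linarith [hcost₀ (k + q)])
    simpa [abs_sub_comm] using this
  · have := hstep (x (k + q : ℕ)) (x ((k + q : ℕ) + 1)) (by linarith [hcost₀ k])
    simpa [hy, abs_sub_comm, add_right_comm] using this

theorem IsGain.not_frequentlyClose (hcont : Continuous (Function.uncurry h)) (h1 : CondH1 h)
    (h3 : CondH3 h) (hx : MinimalConfig h x) (hy : MinimalConfig h y) (G : IsGain h x y U c)
    (hle : x (c - 1) ≤ y (c - 1)) (R : ℝ) : ¬FrequentlyClose x y R := by
  intro happ
  obtain ⟨ε, hε, hmod⟩ := h1.exists_uniform_continuity hcont (R + 1) _ (div_pos G.2 four_pos)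
  obtain ⟨k, hk, hyx, hxk, hyk⟩ := happ (min ε 1) (by positivity) (c + 2)
  have hlt := G.lt_of_le h3 hx hy hle (show c < k by omega)
  have hkey := G.le_endpoint_defect h3 hx hy hle (show c < k by omega)
  rw [G.1 k (by omega), G.1 (k - 1) (by omega), min_eq_right hlt.le, max_eq_left hlt.le] at hkey
  set u := min (x (k - 1)) (y (k - 1))
  set v := max (x (k - 1)) (y (k - 1))
  have hxy₁ : |x k - y k| ≤ 1 := by rw [abs_sub_comm]; exact hyx.trans (min_le_right _ _)
  have hxyε : |x k - y k| ≤ ε := by rw [abs_sub_comm]; exact hyx.trans (min_le_left _ _)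
  have hyu : |y k - u| ≤ R := by
    simpa [min_eq_right hlt.le] using
      (abs_min_sub_min_le_max (x k) (y k) (x (k - 1)) (y (k - 1))).trans (max_le hxk hyk)
  have hxv : |x k - v| ≤ R := by
    simpa [max_eq_left hlt.le] using
      (abs_max_sub_max_le_max (x k) (y k) (x (k - 1)) (y (k - 1))).trans (max_le hxk hyk)
  have hU := hmod u (y k) (x k) (by linarith) (by linarith [abs_sub_le (x k) (y k) u]) hxyε
  have hV := hmod v (x k) (y k) (by linarith)
    (by linarith [abs_sub_le (y k) (x k) v, abs_sub_comm (x k) (y k)])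
    (by rwa [abs_sub_comm] at hxyε)
  linarith [abs_le.1 hU, abs_le.1 hV, G.2]

theorem MinimalConfig.translate_trichotomy (hcont : Continuous (Function.uncurry h))
    (h1 : CondH1 h) (h2 : CondH2 h) (h3 : CondH3 h) (h4 : CondH4 h) {x : ℤ → ℝ}
    (hx : MinimalConfig h x) {p : ℤ} {q : ℕ} (hq : 0 < q)
    (hrot : Tendsto (fun n : ℕ => x n / n) atTop (𝓝 ((p : ℝ) / q))) :
    (∀ i : ℤ, x i + p < x (i + q)) ∨ (∀ i : ℤ, x (i + q) = x i + p) ∨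
      ∀ i : ℤ, x (i + q) < x i + p := by
  set y : ℤ → ℝ := fun i => x (i + q) - p
  have hy : MinimalConfig h y := hx.translate_s5 h1 q p
  by_contra! hcon
  obtain ⟨⟨a, ha⟩, ⟨i, hi⟩, ⟨b, hb⟩⟩ := hcon
  obtain ⟨U, c, G⟩ := exists_isGain h3 h4 hx hy
    (fun e => hi (by linarith [congrFun e i])) ⟨a, by simp only [y]; linarith⟩
    ⟨b, by simp only [y]; linarith⟩
  rcases le_total (x (c - 1)) (y (c - 1)) with hle | hle
  · have hsign : ∀ᶠ k : ℕ in atTop, y k ≤ x k :=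
      eventually_atTop.2 ⟨(c + 1).toNat, fun k hk => (G.lt_of_le h3 hx hy hle (by omega)).le⟩
    obtain ⟨R, happ⟩ := hx.exists_frequentlyClose_translate hcont h1 h2 hq hrot (fun _ => rfl)
      (Or.inr hsign)
    exact G.not_frequentlyClose hcont h1 h3 hx hy hle R happ
  · have hsign : ∀ᶠ k : ℕ in atTop, x k ≤ y k :=
      eventually_atTop.2 ⟨(c + 1).toNat, fun k hk => (G.symm.lt_of_le h3 hy hx hle (by omega)).le⟩
    obtain ⟨R, happ⟩ := hx.exists_frequentlyClose_translate hcont h1 h2 hq hrot (fun _ => rfl)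
      (Or.inl hsign)
    exact G.symm.not_frequentlyClose hcont h1 h3 hy hx hle R happ.symm

end

theorem rational_rotation_trichotomy_general
    (h : ℝ → ℝ → ℝ) (hcont : Continuous (Function.uncurry h))
    (h1 : CondH1 h) (h2 : CondH2 h) (h3 : CondH3 h) (h4 : CondH4 h)
    (p q : ℤ) (hq : 0 < q)
    (x : ℤ → ℝ) (hx : MinimalConfig h x)
    (hrot : Tendsto (fun n : ℕ => x n / n) atTop (𝓝 ((p : ℝ) / q))) :
    ((∀ i : ℤ, x i + p < x (i + q)) ∧ ¬(∀ i : ℤ, x (i + q) = x i + p) ∧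
        ¬(∀ i : ℤ, x (i + q) < x i + p)) ∨
    (¬(∀ i : ℤ, x i + p < x (i + q)) ∧ (∀ i : ℤ, x (i + q) = x i + p) ∧
        ¬(∀ i : ℤ, x (i + q) < x i + p)) ∨
    (¬(∀ i : ℤ, x i + p < x (i + q)) ∧ ¬(∀ i : ℤ, x (i + q) = x i + p) ∧
        (∀ i : ℤ, x (i + q) < x i + p)) := by
  lift q to ℕ using hq.le
  rcases hx.translate_trichotomy hcont h1 h2 h3 h4 (by omega) hrot with H | H | H
  · exact Or.inl ⟨H, fun H' => by linarith [H 0, H' 0], fun H' => by linarith [H 0, H' 0]⟩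
  · exact Or.inr (Or.inl ⟨fun H' => by linarith [H 0, H' 0], H, fun H' => by linarith [H 0, H' 0]⟩)
  · exact Or.inr (Or.inr ⟨fun H' => by linarith [H 0, H' 0], fun H' => by linarith [H 0, H' 0], H⟩)

/-- Trichotomy for minimal configurations with rational rotation number p/q. -/
theorem rational_rotation_trichotomy
    (h : ℝ → ℝ → ℝ) (hcont : Continuous (Function.uncurry h))
    (h1 : CondH1 h) (h2 : CondH2 h) (h3 : CondH3 h) (h4 : CondH4 h)
    (p q : ℤ) (hq : 0 < q) (hpq : Int.gcd p q = 1)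
    (x : ℤ → ℝ) (hx : MinimalConfig h x)
    (hrot : Tendsto (fun n : ℕ => x n / n) atTop (𝓝 ((p : ℝ) / q))) :
    ((∀ i : ℤ, x i + p < x (i + q)) ∧ ¬(∀ i : ℤ, x (i + q) = x i + p) ∧
        ¬(∀ i : ℤ, x (i + q) < x i + p)) ∨
    (¬(∀ i : ℤ, x i + p < x (i + q)) ∧ (∀ i : ℤ, x (i + q) = x i + p) ∧
        ¬(∀ i : ℤ, x (i + q) < x i + p)) ∨
    (¬(∀ i : ℤ, x i + p < x (i + q)) ∧ ¬(∀ i : ℤ, x (i + q) = x i + p) ∧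
        (∀ i : ℤ, x (i + q) < x i + p)) :=
  rational_rotation_trichotomy_general h hcont h1 h2 h3 h4 p q hq x hx hrot
end

section
/- Let h : ℝ² → ℝ be continuous and satisfy conditions (h1) and (h2). If (x^(k))_{k∈ℕ} is a sequence of h-minimal configurations converging pointwise to a configuration x (i.e. x^(k)_i → x_i for every i ∈ ℤ as k → ∞), then x is an h-minimal configuration. In particular, the set of h-minimal configurations is closed in the product topology on ℝ^ℤ. -/
open Filter Topology MeasureTheory

/-- A pointwise limit of minimal configurations is minimal; the set of minimal
configurations is closed in the product topology. -/
theorem minimal_configs_closed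
    (h : ℝ → ℝ → ℝ) (hcont : Continuous (Function.uncurry h))
    (h1 : CondH1 h) (h2 : CondH2 h)
    (xs : ℕ → ℤ → ℝ) (hxs : ∀ k : ℕ, MinimalConfig h (xs k))
    (x : ℤ → ℝ) (hlim : ∀ i : ℤ, Tendsto (fun k : ℕ => xs k i) atTop (𝓝 (x i))) :
    MinimalConfig h x ∧ IsClosed {z : ℤ → ℝ | MinimalConfig h z} := by
  have cont_upd : ∀ (y : ℤ → ℝ) (j k i : ℤ),
      Continuous (fun z : ℤ → ℝ =>
        Function.update (Function.update y j (z j)) k (z k) i) := by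
    intro y j k i
    simp only [Function.update_apply]
    split_ifs <;> first | exact continuous_apply _ | exact continuous_const
  have hcl : IsClosed {z : ℤ → ℝ | MinimalConfig h z} := by
    have hset : {z : ℤ → ℝ | MinimalConfig h z} =
        ⋂ (j : ℤ) (k : ℤ) (_ : j < k) (y : ℤ → ℝ),
          {z : ℤ → ℝ | ∑ i ∈ Finset.Ico j k, h (z i) (z (i + 1)) ≤
            ∑ i ∈ Finset.Ico j k,
              h (Function.update (Function.update y j (z j)) k (z k) i)
                (Function.update (Function.update y j (z j)) k (z k) (i + 1))} := by
      ext z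
      simp only [Set.mem_setOf_eq, Set.mem_iInter]
      constructor
      · intro hz j k hjk y
        apply hz j k hjk
        · rw [Function.update_of_ne hjk.ne, Function.update_self]
        · rw [Function.update_self]
      · intro hz j k hjk y hyj hyk
        have := hz j k hjk y
        rwa [← hyj, Function.update_eq_self, ← hyk, Function.update_eq_self] at this
    rw [hset]
    refine isClosed_iInter fun j => isClosed_iInter fun k =>
      isClosed_iInter fun _ => isClosed_iInter fun y => isClosed_le ?_ ?_
    · refine continuous_finset_sum _ fun i _ => ?_
      have hp : Continuous fun z : ℤ → ℝ => (z i, z (i + 1)) :=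
        (continuous_apply i).prodMk (continuous_apply (i + 1))
      exact hcont.comp hp
    · refine continuous_finset_sum _ fun i _ => ?_
      have hp : Continuous fun z : ℤ → ℝ =>
          (Function.update (Function.update y j (z j)) k (z k) i,
           Function.update (Function.update y j (z j)) k (z k) (i + 1)) :=
        (cont_upd y j k i).prodMk (cont_upd y j k (i + 1))
      exact hcont.comp hp
  refine ⟨?_, hcl⟩
  have htend : Tendsto xs atTop (𝓝 x) := tendsto_pi_nhds.2 hlim
  exact hcl.mem_of_tendsto htend (Filter.Eventually.of_forall hxs)
end

section
/- Let h₁, h₂ : ℝ² → ℝ be continuous functions satisfying conditions (h1) and (h2). Then for every (x, x') ∈ ℝ², the infimum inf_{y∈ℝ} (h₁(x, y) + h₂(y, x')) is attained at some y ∈ ℝ; moreover the conjunction h₁*h₂(x, x') = min_{y∈ℝ} (h₁(x, y) + h₂(y, x')) is a continuous function of (x, x') and satisfies condition (h1), i.e. h₁*h₂(x+1, x'+1) = h₁*h₂(x, x') for all x, x'. -/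
open Filter Topology MeasureTheory

/-! By (h2) both summands of `h₁ x y + h₂ y x'` tend to `+∞` as `|y| → ∞`, locally uniformly in
`(x, x')`. So near each point the infimum over `ℝ` is the minimum over one fixed compact set of a
jointly continuous function: it is attained and depends continuously on `(x, x')`. Periodicity
follows from the substitution `y ↦ y + 1`. -/

open Function Bornology

section CoerciveInfimum

variable {X Y : Type*} [TopologicalSpace X] [TopologicalSpace Y]

theorem iInf_eq_sInf_image_of_forall_compl_le {f : Y → ℝ} {K : Set Y} {y₀ : Y}
    (hK : IsCompact K) (hy₀ : y₀ ∈ K) (hf : ContinuousOn f K) (hout : ∀ y ∉ K, f y₀ ≤ f y) :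
    ⨅ y, f y = sInf (f '' K) := by
  have : Nonempty Y := ⟨y₀⟩
  obtain ⟨m, -, hm, hmin⟩ := hK.exists_sInf_image_eq_and_le ⟨y₀, hy₀⟩ hf
  have hglobal : ∀ y, f m ≤ f y := fun y => by
    by_cases hy : y ∈ K
    · exact hmin y hy
    · exact (hmin y₀ hy₀).trans (hout y hy)
  rw [hm]
  exact le_antisymm (ciInf_le ⟨f m, Set.forall_mem_range.2 hglobal⟩ m) (le_ciInf hglobal)

theorem exists_isCompact_eventually_forall_compl_le {F : X → Y → ℝ} {a : X} (y₀ : Y)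
    (hy₀ : ContinuousAt (fun x => F x y₀) a)
    (hcoer : Tendsto (uncurry F) (𝓝 a ×ˢ cocompact Y) atTop) :
    ∃ K, IsCompact K ∧ y₀ ∈ K ∧ ∀ᶠ x in 𝓝 a, ∀ y ∉ K, F x y₀ ≤ F x y := by
  obtain ⟨U, hU, S, hS, hUS⟩ :=
    mem_prod_iff.1 (hcoer.eventually (eventually_ge_atTop (F a y₀ + 1)))
  obtain ⟨t, ht, htS⟩ := mem_cocompact.1 hS
  refine ⟨insert y₀ t, ht.insert y₀, Set.mem_insert y₀ t, ?_⟩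
  filter_upwards [hU, hy₀.eventually (gt_mem_nhds (lt_add_one (F a y₀)))] with x hxU hxy₀ y hy
  have hyS : y ∈ S := htS fun hyt => hy (Set.mem_insert_of_mem y₀ hyt)
  exact hxy₀.le.trans (hUS (Set.mk_mem_prod hxU hyS))

theorem continuous_iInf_of_tendsto_cocompact [Nonempty Y] {F : X → Y → ℝ}
    (hF : Continuous (uncurry F))
    (hcoer : ∀ a, Tendsto (uncurry F) (𝓝 a ×ˢ cocompact Y) atTop) :
    Continuous fun x => ⨅ y, F x y := by
  refine continuous_iff_continuousAt.2 fun a => ?_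
  obtain ⟨y₀⟩ := ‹Nonempty Y›
  obtain ⟨K, hK, hy₀K, hout⟩ := exists_isCompact_eventually_forall_compl_le y₀
    (hF.comp (continuous_id.prodMk continuous_const)).continuousAt (hcoer a)
  refine (hK.continuous_sInf hF).continuousAt.congr ?_
  filter_upwards [hout] with x hx
  exact (iInf_eq_sInf_image_of_forall_compl_le hK hy₀K
    (hF.comp (continuous_const.prodMk continuous_id)).continuousOn hx).symm

theorem exists_forall_le_of_tendsto_cocompact [Nonempty Y] {F : X → Y → ℝ} {x : X}
    (hF : Continuous (uncurry F)) (hcoer : Tendsto (uncurry F) (𝓝 x ×ˢ cocompact Y) atTop) :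
    ∃ y, ∀ z, F x y ≤ F x z :=
  (hF.comp (continuous_const.prodMk continuous_id)).exists_forall_le
    (hcoer.comp (tendsto_const_nhds.prodMk tendsto_id))

end CoerciveInfimum

theorem tendsto_dist_atTop_of_tendsto_nhds_of_tendsto_cobounded {α X : Type*}
    [PseudoMetricSpace X] {l : Filter α} {f g : α → X} {a : X}
    (hf : Tendsto f l (𝓝 a)) (hg : Tendsto g l (cobounded X)) :
    Tendsto (fun t => dist (f t) (g t)) l atTop := by
  have hnear : Tendsto (fun t => -dist (f t) a) l (𝓝 0) := by
    simpa using (hf.dist (tendsto_const_nhds (x := a))).neg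
  have hfar : Tendsto (fun t => dist a (g t) + -dist (f t) a) l atTop :=
    ((Metric.tendsto_dist_left_atTop_iff a).2 hg).atTop_add hnear
  refine tendsto_atTop_mono (fun t => ?_) hfar
  linarith [dist_triangle a (f t) (g t), dist_comm a (f t)]

theorem CondH2.tendsto_atTop_of_tendsto_dist {α : Type*} {h : ℝ → ℝ → ℝ} (hh : CondH2 h)
    {l : Filter α} {f g : α → ℝ} (hfg : Tendsto (fun t => dist (f t) (g t)) l atTop) :
    Tendsto (fun t => h (f t) (g t)) l atTop := by
  refine tendsto_atTop.2 fun M => ?_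
  obtain ⟨R, hR⟩ := hh M
  filter_upwards [tendsto_atTop.1 hfg R] with t ht
  simpa using hR (f t) (g t - f t) (by rwa [Real.dist_eq, abs_sub_comm] at ht)

/-- The conjunction `h₁ * h₂` of the paper. -/
noncomputable def conjunction (h₁ h₂ : ℝ → ℝ → ℝ) (x x' : ℝ) : ℝ :=
  ⨅ y, h₁ x y + h₂ y x'

theorem condH1_conjunction {h₁ h₂ : ℝ → ℝ → ℝ} (h₁1 : CondH1 h₁) (h₂1 : CondH1 h₂) :
    CondH1 (conjunction h₁ h₂) := fun x x' => by
  rw [conjunction, conjunction, ← (Equiv.addRight (1 : ℝ)).iInf_comp]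
  exact iInf_congr fun y => by rw [Equiv.coe_addRight, h₁1 x y, h₂1 y x']

theorem tendsto_conjunction_summand_atTop {h₁ h₂ : ℝ → ℝ → ℝ} (h₁2 : CondH2 h₁)
    (h₂2 : CondH2 h₂) (a : ℝ × ℝ) :
    Tendsto (uncurry fun (p : ℝ × ℝ) y => h₁ p.1 y + h₂ y p.2) (𝓝 a ×ˢ cocompact ℝ) atTop := by
  have hcobounded : Tendsto (fun q : (ℝ × ℝ) × ℝ => q.2) (𝓝 a ×ˢ cocompact ℝ) (cobounded ℝ) := by
    rw [Metric.cobounded_eq_cocompact]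
    exact tendsto_snd
  have hdist (i : ℝ × ℝ → ℝ) (hi : Continuous i) :
      Tendsto (fun q : (ℝ × ℝ) × ℝ => dist (i q.1) q.2) (𝓝 a ×ˢ cocompact ℝ) atTop :=
    tendsto_dist_atTop_of_tendsto_nhds_of_tendsto_cobounded
      ((hi.tendsto a).comp tendsto_fst) hcobounded
  refine (h₁2.tendsto_atTop_of_tendsto_dist (hdist Prod.fst continuous_fst)).atTop_add_atTop
    (h₂2.tendsto_atTop_of_tendsto_dist ?_)
  simpa only [dist_comm] using hdist Prod.snd continuous_snd

/-- The infimum in the conjunction is attained; the conjunction is continuous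
and satisfies (h1). -/
theorem conjunction_attained_continuous_periodic
    (h₁ h₂ : ℝ → ℝ → ℝ)
    (hc₁ : Continuous (Function.uncurry h₁)) (hc₂ : Continuous (Function.uncurry h₂))
    (h₁1 : CondH1 h₁) (h₁2 : CondH2 h₁) (h₂1 : CondH1 h₂) (h₂2 : CondH2 h₂) :
    (∀ x x' : ℝ, ∃ y : ℝ, ∀ z : ℝ, h₁ x y + h₂ y x' ≤ h₁ x z + h₂ z x') ∧
    Continuous (Function.uncurry fun x x' : ℝ => ⨅ y : ℝ, (h₁ x y + h₂ y x')) ∧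
    CondH1 (fun x x' : ℝ => ⨅ y : ℝ, (h₁ x y + h₂ y x')) := by
  have hF : Continuous (uncurry fun (p : ℝ × ℝ) y => h₁ p.1 y + h₂ y p.2) :=
    (hc₁.comp (continuous_fst.fst.prodMk continuous_snd)).add
      (hc₂.comp (continuous_snd.prodMk continuous_fst.snd))
  have hcoer := tendsto_conjunction_summand_atTop h₁2 h₂2
  exact ⟨fun x x' => exists_forall_le_of_tendsto_cocompact hF (hcoer (x, x')),
    continuous_iInf_of_tendsto_cocompact hF hcoer, condH1_conjunction h₁1 h₂1⟩
end

section
/- If a continuous function h : ℝ² → ℝ satisfies conditions (h5) and (h6θ) for some θ > 0, then h satisfies conditions (h3) and (h4); that is: (h3) if x < ξ and x' < ξ', then h(x, x') + h(ξ, ξ') < h(x, ξ') + h(ξ, x'); and (h4) if (x̄, x, x') and (ξ̄, x, ξ') are both h-minimal segments and are distinct, then (x̄ − ξ̄)(x' − ξ') < 0. -/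
open Filter Topology MeasureTheory

private lemma rect_lb (g : ℝ → ℝ → ℝ) (hg : Continuous (Function.uncurry g))
    (a b c d ε : ℝ) (hab : a ≤ b) (hcd : c ≤ d)
    (hε : ∀ s ∈ Set.Icc a b, ∀ s' ∈ Set.Icc c d, ε ≤ g s s') :
    ε * ((b - a) * (d - c)) ≤ ∫ s in a..b, ∫ s' in c..d, g s s' := by
  have hinner : ∀ s ∈ Set.Icc a b, ε * (d - c) ≤ ∫ s' in c..d, g s s' := by
    intro s hs
    have hgi : IntervalIntegrable (g s) MeasureTheory.volume c d :=
      (hg.comp (Continuous.prodMk_right s)).intervalIntegrable c d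
    have := intervalIntegral.integral_mono_on (μ := MeasureTheory.volume) hcd
      (intervalIntegrable_const (c := ε)) hgi (fun s' hs' => hε s hs s' hs')
    simpa [mul_comm] using this
  have hcont : Continuous fun s => ∫ s' in c..d, g s s' :=
    intervalIntegral.continuous_parametric_intervalIntegral_of_continuous'
      (μ := MeasureTheory.volume) hg c d
  have := intervalIntegral.integral_mono_on (μ := MeasureTheory.volume) hab
    (intervalIntegrable_const (c := ε * (d - c))) (hcont.intervalIntegrable a b) hinner
  simp only [intervalIntegral.integral_const, smul_eq_mul] at this
  nlinarith [this]

private lemma exists_min (ρ : ℝ → ℝ → ℝ) (hρc : Continuous (Function.uncurry ρ))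
    (hρpos : ∀ s s' : ℝ, 0 < ρ s s') (a b c d : ℝ) (hab : a ≤ b) (hcd : c ≤ d) :
    ∃ ε > 0, ∀ s ∈ Set.Icc a b, ∀ s' ∈ Set.Icc c d, ε ≤ ρ s s' := by
  have hK : IsCompact (Set.Icc a b ×ˢ Set.Icc c d) := isCompact_Icc.prod isCompact_Icc
  have hne : (Set.Icc a b ×ˢ Set.Icc c d).Nonempty :=
    ⟨(a, c), Set.mem_prod.2 ⟨Set.left_mem_Icc.2 hab, Set.left_mem_Icc.2 hcd⟩⟩
  obtain ⟨p, hp, hmin⟩ := hK.exists_isMinOn hne hρc.continuousOn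
  refine ⟨ρ p.1 p.2, hρpos _ _, fun s hs s' hs' => ?_⟩
  have hm : (s, s') ∈ Set.Icc a b ×ˢ Set.Icc c d := ⟨hs, hs'⟩
  exact hmin hm

private lemma semiconcave_bound (θ a x t : ℝ) (f : ℝ → ℝ)
    (hc : ConvexOn ℝ Set.univ fun m => θ * (m - a) ^ 2 / 2 - f m) :
    f (x + t) + f (x - t) - 2 * f x ≤ θ * t ^ 2 := by
  have := hc.2 (Set.mem_univ (x + t)) (Set.mem_univ (x - t))
    (by norm_num : (0:ℝ) ≤ 1/2) (by norm_num : (0:ℝ) ≤ 1/2) (by norm_num)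
  simp only [smul_eq_mul] at this
  have hx : (1/2 : ℝ) * (x + t) + (1/2 : ℝ) * (x - t) = x := by ring
  rw [hx] at this
  nlinarith [this]

/-- Conditions (h5) and (h6θ) imply conditions (h3) and (h4). -/
theorem h5_h6_implies_h3_h4
    (h : ℝ → ℝ → ℝ) (hcont : Continuous (Function.uncurry h))
    (θ : ℝ) (hθ : 0 < θ) (h5 : CondH5 h) (h6 : CondH6 θ h) :
    CondH3 h ∧ CondH4 h := by
  obtain ⟨ρ, hρc, hρpos, hρint⟩ := h5
  have H3 : CondH3 h := by
    intro x ξ x' ξ' hxξ hx'ξ'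
    obtain ⟨ε, hε, hmin⟩ := exists_min ρ hρc hρpos x ξ x' ξ' hxξ.le hx'ξ'.le
    have h1 := rect_lb ρ hρc x ξ x' ξ' ε hxξ.le hx'ξ'.le hmin
    have h2 := hρint x ξ x' ξ' hxξ hx'ξ'
    nlinarith [mul_pos (sub_pos.2 hxξ) (sub_pos.2 hx'ξ')]
  refine ⟨H3, ?_⟩
  -- main lemma: no "non-crossing" pair of distinct minimal triples with xb ≤ ξb, x' ≤ ξ'
  have main : ∀ xb x x' ξb ξ' : ℝ, xb ≤ ξb → x' ≤ ξ' →
      MinTriple h xb x x' → MinTriple h ξb x ξ' → (xb ≠ ξb ∨ x' ≠ ξ') → False := by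
    intro xb x x' ξb ξ' hb h' m1 m2 hne
    -- constant c₁ for the first-coordinate gap
    have H1 : ∃ c₁ : ℝ, 0 ≤ c₁ ∧ (xb < ξb → 0 < c₁) ∧ ∀ t : ℝ, 0 < t → t ≤ 1 →
        c₁ * t ≤ h xb (x + t) + h ξb x - h xb x - h ξb (x + t) := by
      rcases eq_or_lt_of_le hb with heq | hlt
      · subst heq
        exact ⟨0, le_refl 0, fun hc => absurd hc (lt_irrefl _), fun t ht ht1 => by ring_nf; simp⟩
      · obtain ⟨ε, hε, hmin⟩ := exists_min ρ hρc hρpos xb ξb x (x + 1) hlt.le (by linarith)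
        refine ⟨ε * (ξb - xb), le_of_lt (mul_pos hε (sub_pos.2 hlt)), fun _ => mul_pos hε (sub_pos.2 hlt), fun t ht ht1 => ?_⟩
        have hxt : x < x + t := by linarith
        have hlb := rect_lb ρ hρc xb ξb x (x + t) ε hlt.le hxt.le
          (fun s hs s' hs' => hmin s hs s' ⟨hs'.1, by linarith [hs'.2]⟩)
        have := hρint xb ξb x (x + t) hlt hxt
        nlinarith
    have H2 : ∃ c₂ : ℝ, 0 ≤ c₂ ∧ (x' < ξ' → 0 < c₂) ∧ ∀ t : ℝ, 0 < t → t ≤ 1 →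
        c₂ * t ≤ h x ξ' + h (x + t) x' - h x x' - h (x + t) ξ' := by
      rcases eq_or_lt_of_le h' with heq | hlt
      · subst heq
        exact ⟨0, le_refl 0, fun hc => absurd hc (lt_irrefl _), fun t ht ht1 => by ring_nf; simp⟩
      · obtain ⟨ε, hε, hmin⟩ := exists_min ρ hρc hρpos x (x + 1) x' ξ' (by linarith) hlt.le
        refine ⟨ε * (ξ' - x'), le_of_lt (mul_pos hε (sub_pos.2 hlt)), fun _ => mul_pos hε (sub_pos.2 hlt), fun t ht ht1 => ?_⟩
        have hxt : x < x + t := by linarith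
        have hlb := rect_lb ρ hρc x (x + t) x' ξ' ε hxt.le hlt.le
          (fun s hs s' hs' => hmin s ⟨hs.1, by linarith [hs.2]⟩ s' hs')
        have := hρint x (x + t) x' ξ' hxt hlt
        nlinarith
    obtain ⟨c₁, hc₁0, hc₁pos, hc₁⟩ := H1
    obtain ⟨c₂, hc₂0, hc₂pos, hc₂⟩ := H2
    have hc : 0 < c₁ + c₂ := by
      rcases hne with hne | hne
      · have := hc₁pos (lt_of_le_of_ne hb hne); linarith
      · have := hc₂pos (lt_of_le_of_ne h' hne); linarith
    set t : ℝ := min 1 ((c₁ + c₂) / (4 * θ)) with ht_def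
    have ht0 : 0 < t := lt_min one_pos (by positivity)
    have ht1 : t ≤ 1 := min_le_left _ _
    have ht2 : t ≤ (c₁ + c₂) / (4 * θ) := min_le_right _ _
    -- semiconcavity bounds
    have sc1 := semiconcave_bound θ xb x t (fun m => h xb m) (by simpa using h6.2 xb)
    have sc2 := semiconcave_bound θ x' x t (fun m => h m x') (by simpa using h6.1 x')
    have hm1 := m1 (x - t)
    have hm2 := m2 (x + t)
    have hA := hc₁ t ht0 ht1
    have hB := hc₂ t ht0 ht1
    -- F(x+t) - F(x) ≤ 2θt² ; combine
    have key : (c₁ + c₂) * t ≤ 2 * θ * t ^ 2 := by nlinarith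
    rw [le_div_iff₀ (by positivity : (0:ℝ) < 4 * θ)] at ht2
    nlinarith [mul_le_mul_of_nonneg_right ht2 ht0.le, mul_pos hθ (mul_pos ht0 ht0)]
  intro xb x x' ξb ξ' m1 m2 hne
  by_contra hcon
  push_neg at hcon
  rcases mul_nonneg_iff.1 hcon with ⟨h1, h2⟩ | ⟨h1, h2⟩
  · exact main ξb x ξ' xb x' (by linarith) (by linarith) m2 m1
      (by rcases hne with a | a; exact Or.inl (Ne.symm a); exact Or.inr (Ne.symm a))
  · exact main xb x x' ξb ξ' (by linarith) (by linarith) m1 m2 hne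
end
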